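/- arXiv:0911.4725 — 7 statements merged into one kernel-verified Lean document; each statement's English description precedes it below -/
import Mathlib

section
/- For every smooth function f : ℝᵐ \ {0} → ℝ and every x ≠ 0 one has Σ_{i=1}^m [ X_i(D_i f)(x) + D_i(X_i f)(x) ] = 2(1+c) ( E f(x) + (δ/2) f(x) ). (This is the scalar content, in the case of trivial multiplicity function k = 0, of the anticommutator relation {x_a, D} = −2(1+c)(E + δ/2) of the osp(1|2) theorem.) -/
open Real

/-- `i`-th partial derivative of a scalar function on Euclidean space. -/
noncomputable def pd {m : ℕ} (i : Fin m) (f : EuclideanSpace ℝ (Fin m) → ℝ)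
    (x : EuclideanSpace ℝ (Fin m)) : ℝ :=
  fderiv ℝ f x (EuclideanSpace.single i 1)

/-- Euler operator `E f (x) = ∑ j, x j * ∂_j f (x)`. -/
noncomputable def euler {m : ℕ} (f : EuclideanSpace ℝ (Fin m) → ℝ)
    (x : EuclideanSpace ℝ (Fin m)) : ℝ :=
  ∑ j, x j * pd j f x

/-- Components `D_i` of the deformed Dirac operator (trivial multiplicity `k = 0`). -/
noncomputable def Dop {m : ℕ} (a b c : ℝ) (i : Fin m)
    (f : EuclideanSpace ℝ (Fin m) → ℝ) (x : EuclideanSpace ℝ (Fin m)) : ℝ :=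
  ‖x‖ ^ (1 - a / 2) * pd i f x + b * ‖x‖ ^ (-(a / 2) - 1) * x i * f x
    + c * ‖x‖ ^ (-(a / 2) - 1) * x i * euler f x

/-- Multiplication operators `X_i f (x) = r^{a/2-1} x_i f(x)`. -/
noncomputable def Xop {m : ℕ} (a : ℝ) (i : Fin m)
    (f : EuclideanSpace ℝ (Fin m) → ℝ) (x : EuclideanSpace ℝ (Fin m)) : ℝ :=
  ‖x‖ ^ (a / 2 - 1) * x i * f x

lemma hasFDerivAt_norm_rpow_of_ne {E : Type*} [NormedAddCommGroup E] [InnerProductSpace ℝ E]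
    {x : E} (hx : x ≠ 0) (p : ℝ) :
    HasFDerivAt (fun y : E => ‖y‖ ^ p) ((p * ‖x‖ ^ (p - 2)) • innerSL ℝ x) x := by
  apply HasStrictFDerivAt.hasFDerivAt
  convert (hasStrictFDerivAt_norm_sq x).rpow_const (p := p / 2) (by simp [hx]) using 0
  simp_rw [← Real.rpow_natCast_mul (norm_nonneg _), ← Nat.cast_smul_eq_nsmul ℝ, smul_smul]
  ring_nf

lemma pd_prod {m : ℕ} (i j : Fin m) (p : ℝ) (f : EuclideanSpace ℝ (Fin m) → ℝ)
    {x : EuclideanSpace ℝ (Fin m)} (hx : x ≠ 0) (hfx : DifferentiableAt ℝ f x) :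
    pd j (fun y => ‖y‖ ^ p * y i * f y) x
      = p * ‖x‖ ^ (p - 2) * x j * x i * f x
        + ‖x‖ ^ p * (EuclideanSpace.single j (1:ℝ) i) * f x
        + ‖x‖ ^ p * x i * pd j f x := by
  have hN := hasFDerivAt_norm_rpow_of_ne hx p
  have hP : HasFDerivAt (fun y : EuclideanSpace ℝ (Fin m) => y i)
      (EuclideanSpace.proj (𝕜 := ℝ) i) x := (EuclideanSpace.proj (𝕜 := ℝ) i).hasFDerivAt
  have h := (hN.mul hP).mul hfx.hasFDerivAt
  unfold pd
  have h' : HasFDerivAt (fun y : EuclideanSpace ℝ (Fin m) => ‖y‖ ^ p * y i * f y) _ x := h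
  rw [h'.fderiv]
  simp [EuclideanSpace.inner_single_right, real_inner_comm]
  ring_nf

lemma pd_Xop {m : ℕ} (a : ℝ) (i j : Fin m) (f : EuclideanSpace ℝ (Fin m) → ℝ)
    {x : EuclideanSpace ℝ (Fin m)} (hx : x ≠ 0) (hfx : DifferentiableAt ℝ f x) :
    pd j (fun y => ‖y‖ ^ (a / 2 - 1) * y i * f y) x
      = (a / 2 - 1) * ‖x‖ ^ (a / 2 - 1 - 2) * x j * x i * f x
        + ‖x‖ ^ (a / 2 - 1) * (EuclideanSpace.single j (1:ℝ) i) * f x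
        + ‖x‖ ^ (a / 2 - 1) * x i * pd j f x := by
  rw [pd_prod i j _ f hx hfx]

lemma sum_self_mul {m : ℕ} (x : EuclideanSpace ℝ (Fin m)) :
    ∑ j, x j * x j = ‖x‖ * ‖x‖ := by
  rw [← real_inner_self_eq_norm_mul_norm]
  simp [PiLp.inner_apply]
  rw [EuclideanSpace.norm_sq_eq]
  simp [sq]

lemma euler_Xop {m : ℕ} (a : ℝ) (i : Fin m) (f : EuclideanSpace ℝ (Fin m) → ℝ)
    {x : EuclideanSpace ℝ (Fin m)} (hx : x ≠ 0) (hfx : DifferentiableAt ℝ f x) :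
    euler (fun y => ‖y‖ ^ (a / 2 - 1) * y i * f y) x
      = (a / 2 - 1) * ‖x‖ ^ (a / 2 - 1 - 2) * (‖x‖ * ‖x‖) * x i * f x
        + ‖x‖ ^ (a / 2 - 1) * x i * f x
        + ‖x‖ ^ (a / 2 - 1) * x i * euler f x := by
  unfold euler
  rw [Finset.sum_congr rfl (fun j _ => by rw [pd_Xop a i j f hx hfx])]
  have e1 : ∑ j, x j * ((a / 2 - 1) * ‖x‖ ^ (a / 2 - 1 - 2) * x j * x i * f x
        + ‖x‖ ^ (a / 2 - 1) * (EuclideanSpace.single j (1:ℝ) i) * f x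
        + ‖x‖ ^ (a / 2 - 1) * x i * pd j f x)
      = (a / 2 - 1) * ‖x‖ ^ (a / 2 - 1 - 2) * x i * f x * (∑ j, x j * x j)
        + ‖x‖ ^ (a / 2 - 1) * f x * (∑ j, x j * EuclideanSpace.single j (1:ℝ) i)
        + ‖x‖ ^ (a / 2 - 1) * x i * (∑ j, x j * pd j f x) := by
    rw [Finset.mul_sum, Finset.mul_sum, Finset.mul_sum, ← Finset.sum_add_distrib,
      ← Finset.sum_add_distrib]
    exact Finset.sum_congr rfl (fun j _ => by ring)
  rw [e1, sum_self_mul]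
  have e2 : ∑ j, x j * EuclideanSpace.single j (1:ℝ) i = x i := by
    simp [EuclideanSpace.single_apply]
  rw [e2]
  ring

theorem stmt_0 (m : ℕ) (hm : 1 ≤ m) (a b c : ℝ) (hc : c ≠ -1)
    (f : EuclideanSpace ℝ (Fin m) → ℝ)
    (hf : ContDiffOn ℝ (⊤ : ℕ∞) f {(0 : EuclideanSpace ℝ (Fin m))}ᶜ)
    (x : EuclideanSpace ℝ (Fin m)) (hx : x ≠ 0) :
    ∑ i, (Xop a i (Dop a b c i f) x + Dop a b c i (Xop a i f) x)
      = 2 * (1 + c) * (euler f x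
          + ((a / 2 + (2 * b + m - 1) / (1 + c)) / 2) * f x) := by
  have hc1 : 1 + c ≠ 0 := fun h => hc (by linarith)
  have hfx : DifferentiableAt ℝ f x :=
    (hf.contDiffAt ((isOpen_compl_singleton).mem_nhds hx)).differentiableAt (by simp)
  set r : ℝ := ‖x‖ with hrdef
  have hr : 0 < r := norm_pos_iff.mpr hx
  have hr0 : r ≠ 0 := hr.ne'
  set u : ℝ := Real.exp (Real.log r * (a / 2)) with hudef
  have hu : u ≠ 0 := Real.exp_ne_zero _
  have h1 : r ^ (1 - a / 2) = r / u := by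
    rw [Real.rpow_def_of_pos hr, show Real.log r * (1 - a / 2)
      = Real.log r - Real.log r * (a / 2) by ring, Real.exp_sub, Real.exp_log hr]
  have h2 : r ^ (a / 2 - 1) = u / r := by
    rw [Real.rpow_def_of_pos hr, show Real.log r * (a / 2 - 1)
      = Real.log r * (a / 2) - Real.log r by ring, Real.exp_sub, Real.exp_log hr]
  have h3 : r ^ (-(a / 2) - 1) = 1 / (u * r) := by
    rw [Real.rpow_def_of_pos hr, show Real.log r * (-(a / 2) - 1)
      = -(Real.log r * (a / 2) + Real.log r) by ring, Real.exp_neg, Real.exp_add,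
      Real.exp_log hr, one_div]
  have h4 : r ^ (a / 2 - 1 - 2) = u / (r * r * r) := by
    rw [Real.rpow_def_of_pos hr, show Real.log r * (a / 2 - 1 - 2)
      = Real.log r * (a / 2) - (Real.log r + (Real.log r + Real.log r)) by ring,
      Real.exp_sub, Real.exp_add, Real.exp_add, Real.exp_log hr]
    ring
  -- per-index identity
  have key : ∀ i : Fin m,
      Xop a i (Dop a b c i f) x + Dop a b c i (Xop a i f) x
        = 2 * (x i * pd i f x) + f x
          + ((1 / (r * r)) * ((2 * b + c * (a / 2) + (a / 2 - 1)) * f x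
                + 2 * c * euler f x)) * (x i * x i) := by
    intro i
    have hpd := pd_Xop a i i f hx hfx
    have hE := euler_Xop a i f hx hfx
    have hsingle : EuclideanSpace.single i (1:ℝ) i = 1 := by
      simp [EuclideanSpace.single_apply]
    rw [hsingle] at hpd
    simp only [Xop, Dop]
    rw [show Xop a i f = fun y => ‖y‖ ^ (a / 2 - 1) * y i * f y from rfl, hpd, hE, ← hrdef, h1, h2, h3, h4]
    field_simp
    ring
  rw [Finset.sum_congr rfl (fun i _ => key i)]
  rw [Finset.sum_add_distrib, Finset.sum_add_distrib, ← Finset.mul_sum, ← Finset.mul_sum,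
    Finset.sum_const, Finset.card_univ, Fintype.card_fin, nsmul_eq_mul, sum_self_mul,
    ← hrdef]
  show 2 * euler f x + (m : ℝ) * f x + _ = _
  field_simp
  ring
end

section
/- For every smooth function f : ℝᵐ \ {0} → ℝ, every index i and every x ≠ 0 one has D_i( ‖·‖^a f )(x) − ‖x‖^a (D_i f)(x) = a(1+c) ‖x‖^{a/2−1} x_i f(x). (Componentwise scalar form, for k = 0, of the relation [x_a², D] = a(1+c) x_a of the osp(1|2) theorem, since x_a² = −r^a.) -/
open Real

/-- Derivative of `‖·‖ ^ a` away from the origin. -/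
lemma hasFDerivAt_norm_rpow' {m : ℕ} (a : ℝ) (x : EuclideanSpace ℝ (Fin m)) (hx : x ≠ 0) :
    HasFDerivAt (fun y : EuclideanSpace ℝ (Fin m) => ‖y‖ ^ a)
      ((a * ‖x‖ ^ (a - 2)) • innerSL ℝ x) x := by
  have hr : (0:ℝ) < ‖x‖ := norm_pos_iff.mpr hx
  have hsq : HasFDerivAt (fun y : EuclideanSpace ℝ (Fin m) => ‖y‖ ^ 2)
      ((2:ℝ) • innerSL ℝ x) x := by
    have := (hasFDerivAt_id x).norm_sq
    refine this.congr_fderiv ?_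
    ext v
    simp
  have hpow : HasDerivAt (fun t : ℝ => t ^ (a/2)) ((a/2) * (‖x‖^2) ^ (a/2 - 1)) (‖x‖^2) :=
    Real.hasDerivAt_rpow_const (Or.inl (by positivity))
  have h2 := hpow.comp_hasFDerivAt x hsq
  have hfun : (fun y : EuclideanSpace ℝ (Fin m) => (‖y‖ ^ 2 : ℝ) ^ (a/2))
      = fun y => ‖y‖ ^ a := by
    funext y
    rw [← Real.rpow_natCast ‖y‖ 2, ← Real.rpow_mul (norm_nonneg y)]
    norm_num
    ring_nf
  have hcoef : ((a/2) * (‖x‖^2) ^ (a/2 - 1)) • ((2:ℝ) • innerSL ℝ x)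
      = (a * ‖x‖ ^ (a - 2)) • innerSL ℝ x := by
    rw [smul_smul]
    congr 1
    rw [← Real.rpow_natCast ‖x‖ 2, ← Real.rpow_mul (norm_nonneg x)]
    norm_num
    ring
  have h3 : HasFDerivAt (fun y : EuclideanSpace ℝ (Fin m) => (‖y‖ ^ 2 : ℝ) ^ (a/2))
      (((a/2) * (‖x‖^2) ^ (a/2 - 1)) • ((2:ℝ) • innerSL ℝ x)) x := h2
  rw [hfun, hcoef] at h3
  exact h3

/-- Product rule for `pd` applied to `‖·‖ ^ a * f`. -/
lemma pd_rpow_mul {m : ℕ} (a : ℝ) (f : EuclideanSpace ℝ (Fin m) → ℝ)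
    (hf : ContDiffOn ℝ (⊤ : ℕ∞) f {(0 : EuclideanSpace ℝ (Fin m))}ᶜ)
    (x : EuclideanSpace ℝ (Fin m)) (hx : x ≠ 0) (j : Fin m) :
    pd j (fun y => ‖y‖ ^ a * f y) x
      = a * ‖x‖ ^ (a - 2) * x j * f x + ‖x‖ ^ a * pd j f x := by
  have hop : {(0 : EuclideanSpace ℝ (Fin m))}ᶜ ∈ nhds x :=
    isOpen_compl_singleton.mem_nhds hx
  have hfd : DifferentiableAt ℝ f x :=
    ((hf.contDiffAt hop).differentiableAt (by simp))
  have hg := hasFDerivAt_norm_rpow' a x hx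
  have hmul : HasFDerivAt (fun y => ‖y‖ ^ a * f y) _ x := hg.mul hfd.hasFDerivAt
  unfold pd
  rw [hmul.fderiv, hfd.hasFDerivAt.fderiv]
  simp [EuclideanSpace.inner_single_right, real_inner_comm]
  ring

/-- `euler` applied to `‖·‖ ^ a * f`. -/
lemma euler_rpow_mul {m : ℕ} (a : ℝ) (f : EuclideanSpace ℝ (Fin m) → ℝ)
    (hf : ContDiffOn ℝ (⊤ : ℕ∞) f {(0 : EuclideanSpace ℝ (Fin m))}ᶜ)
    (x : EuclideanSpace ℝ (Fin m)) (hx : x ≠ 0) :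
    euler (fun y => ‖y‖ ^ a * f y) x = a * ‖x‖ ^ a * f x + ‖x‖ ^ a * euler f x := by
  have hr : (0:ℝ) < ‖x‖ := norm_pos_iff.mpr hx
  have hsum : ∑ j, x j ^ 2 = ‖x‖ ^ (2:ℕ) := by
    rw [EuclideanSpace.norm_eq, Real.sq_sqrt (by positivity)]
    simp [sq_abs]
  have hpow : ‖x‖ ^ (a - 2) * ‖x‖ ^ (2:ℕ) = ‖x‖ ^ a := by
    rw [← Real.rpow_natCast ‖x‖ 2, ← Real.rpow_add hr]
    norm_num
  unfold euler
  calc ∑ j, x j * pd j (fun y => ‖y‖ ^ a * f y) x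
      = ∑ j, (a * ‖x‖ ^ (a - 2) * f x * x j ^ 2 + ‖x‖ ^ a * (x j * pd j f x)) := by
        refine Finset.sum_congr rfl fun j _ => ?_
        rw [pd_rpow_mul a f hf x hx j]; ring
    _ = a * ‖x‖ ^ (a - 2) * f x * (∑ j, x j ^ 2) + ‖x‖ ^ a * ∑ j, x j * pd j f x := by
        rw [Finset.sum_add_distrib, ← Finset.mul_sum, ← Finset.mul_sum]
    _ = a * ‖x‖ ^ a * f x + ‖x‖ ^ a * ∑ j, x j * pd j f x := by
        rw [hsum]
        rw [show a * ‖x‖ ^ (a - 2) * f x * ‖x‖ ^ (2:ℕ)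
          = a * (‖x‖ ^ (a - 2) * ‖x‖ ^ (2:ℕ)) * f x by ring, hpow]

theorem stmt_2 (m : ℕ) (hm : 1 ≤ m) (a b c : ℝ) (hc : c ≠ -1)
    (f : EuclideanSpace ℝ (Fin m) → ℝ)
    (hf : ContDiffOn ℝ (⊤ : ℕ∞) f {(0 : EuclideanSpace ℝ (Fin m))}ᶜ)
    (i : Fin m) (x : EuclideanSpace ℝ (Fin m)) (hx : x ≠ 0) :
    Dop a b c i (fun y => ‖y‖ ^ a * f y) x - ‖x‖ ^ a * Dop a b c i f x
      = a * (1 + c) * ‖x‖ ^ (a / 2 - 1) * x i * f x := by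
  have hr : (0:ℝ) < ‖x‖ := norm_pos_iff.mpr hx
  have e1 : ‖x‖ ^ (1 - a/2) * ‖x‖ ^ (a - 2) = ‖x‖ ^ (a/2 - 1) := by
    rw [← Real.rpow_add hr]; ring_nf
  have e4 : ‖x‖ ^ (-(a/2) - 1) * ‖x‖ ^ a = ‖x‖ ^ (a/2 - 1) := by
    rw [← Real.rpow_add hr]; ring_nf
  unfold Dop
  rw [pd_rpow_mul a f hf x hx i, euler_rpow_mul a f hf x hx]
  simp only [show (fun y : EuclideanSpace ℝ (Fin m) => ‖y‖ ^ a * f y) x = ‖x‖ ^ a * f x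
    from rfl]
  linear_combination (a * x i * f x) * e1 + (a * c * x i * f x) * e4
end

section
/- Let m ≥ 1 and define, for i = 1,…,m and smooth f : ℝᵐ \ {0} → ℝ, the operator D_i^{(−2)} f(x) = ‖x‖² ∂_i f(x) + (2−m) x_i f(x) − 2 x_i E f(x) (the parameter choice a = −2, b = 2−m, c = −2). Then for every smooth f : ℝᵐ \ {0} → ℝ and every x ≠ 0, Σ_{i=1}^m D_i^{(−2)}(D_i^{(−2)} f)(x) = ‖x‖⁴ Δf(x). (This is the k = 0 case of the paper's theorem that the deformed Dirac operator 𝒟_{k,−2} = r²𝒟_k − (μ−2)x − 2xE factorizes r⁴Δ_k, i.e. 𝒟_{k,−2}² = −r⁴Δ_k.) -/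
open Real

/-- The operator `D_i^{(-2)} f (x) = ‖x‖² ∂_i f(x) + (2-m) x_i f(x) - 2 x_i E f(x)`,
the parameter choice `a = -2`, `b = 2-m`, `c = -2`. -/
noncomputable def DopM2 {m : ℕ} (i : Fin m)
    (f : EuclideanSpace ℝ (Fin m) → ℝ) (x : EuclideanSpace ℝ (Fin m)) : ℝ :=
  ‖x‖ ^ 2 * pd i f x + (2 - (m : ℝ)) * x i * f x - 2 * x i * euler f x

section Aux

variable {m : ℕ} {f g h : EuclideanSpace ℝ (Fin m) → ℝ} {x : EuclideanSpace ℝ (Fin m)} {i j : Fin m}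

lemma pd_add (hg : DifferentiableAt ℝ g x) (hh : DifferentiableAt ℝ h x) :
    pd i (fun y => g y + h y) x = pd i g x + pd i h x := by
  simp [pd, fderiv_fun_add hg hh]

lemma pd_sub (hg : DifferentiableAt ℝ g x) (hh : DifferentiableAt ℝ h x) :
    pd i (fun y => g y - h y) x = pd i g x - pd i h x := by
  simp [pd, fderiv_fun_sub hg hh]

lemma pd_mul (hg : DifferentiableAt ℝ g x) (hh : DifferentiableAt ℝ h x) :
    pd i (fun y => g y * h y) x = pd i g x * h x + g x * pd i h x := by
  simp [pd, fderiv_fun_mul hg hh]; ring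

lemma pd_const_mul (c : ℝ) (hg : DifferentiableAt ℝ g x) :
    pd i (fun y => c * g y) x = c * pd i g x := by
  simp [pd, fderiv_const_mul hg]

lemma pd_sum {ι : Type*} (s : Finset ι) (F : ι → EuclideanSpace ℝ (Fin m) → ℝ)
    (hF : ∀ k ∈ s, DifferentiableAt ℝ (F k) x) :
    pd i (fun y => ∑ k ∈ s, F k y) x = ∑ k ∈ s, pd i (F k) x := by
  simp [pd, fderiv_fun_sum hF]

lemma diffAt_normSq : DifferentiableAt ℝ (fun y : EuclideanSpace ℝ (Fin m) => ‖y‖ ^ 2) x :=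
  ((hasFDerivAt_id x).norm_sq).differentiableAt

lemma pd_normSq : pd i (fun y => ‖y‖ ^ 2) x = 2 * x i := by
  have h2 : HasFDerivAt (fun y : EuclideanSpace ℝ (Fin m) => ‖y‖ ^ 2)
      (2 • ((innerSL ℝ x).comp (ContinuousLinearMap.id ℝ _))) x := (hasFDerivAt_id x).norm_sq
  rw [pd, h2.fderiv]
  simp [EuclideanSpace.inner_single_right, real_inner_comm]

lemma diffAt_coord : DifferentiableAt ℝ (fun y : EuclideanSpace ℝ (Fin m) => y i) x :=
  (EuclideanSpace.proj (𝕜 := ℝ) i).differentiableAt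

lemma pd_coord : pd j (fun y : EuclideanSpace ℝ (Fin m) => y i) x = if i = j then 1 else 0 := by
  have h1 : pd j (fun y : EuclideanSpace ℝ (Fin m) => y i) x
      = fderiv ℝ (EuclideanSpace.proj (𝕜 := ℝ) i) x (EuclideanSpace.single j 1) := rfl
  rw [h1, ContinuousLinearMap.fderiv]
  simp [EuclideanSpace.single_apply]

lemma contDiffOn_pd (hf : ContDiffOn ℝ (⊤ : ℕ∞) f {(0 : EuclideanSpace ℝ (Fin m))}ᶜ) (i : Fin m) :
    ContDiffOn ℝ (⊤ : ℕ∞) (pd i f) {(0 : EuclideanSpace ℝ (Fin m))}ᶜ :=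
  (hf.fderiv_of_isOpen isOpen_compl_singleton (by simp)).clm_apply contDiffOn_const

lemma diffAt_pd (hf : ContDiffOn ℝ (⊤ : ℕ∞) f {(0 : EuclideanSpace ℝ (Fin m))}ᶜ) (hx : x ≠ 0)
    (i : Fin m) : DifferentiableAt ℝ (pd i f) x :=
  ((contDiffOn_pd hf i).differentiableOn (by simp)).differentiableAt
    (isOpen_compl_singleton.mem_nhds hx)

lemma diffAt_f (hf : ContDiffOn ℝ (⊤ : ℕ∞) f {(0 : EuclideanSpace ℝ (Fin m))}ᶜ) (hx : x ≠ 0) :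
    DifferentiableAt ℝ f x :=
  (hf.differentiableOn (by simp)).differentiableAt (isOpen_compl_singleton.mem_nhds hx)

lemma pd_symm (hf : ContDiffOn ℝ (⊤ : ℕ∞) f {(0 : EuclideanSpace ℝ (Fin m))}ᶜ) (hx : x ≠ 0) :
    pd j (pd i f) x = pd i (pd j f) x := by
  have hd : DifferentiableAt ℝ (fderiv ℝ f) x :=
    (((hf.fderiv_of_isOpen isOpen_compl_singleton (by simp)).differentiableOn
      (by simp : ((⊤ : ℕ∞) : WithTop ℕ∞) ≠ 0)).differentiableAt (isOpen_compl_singleton.mem_nhds hx))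
  have key : ∀ a b : Fin m, pd a (pd b f) x
      = fderiv ℝ (fderiv ℝ f) x (EuclideanSpace.single a 1) (EuclideanSpace.single b 1) := by
    intro a b
    have hb : pd b f = fun y => fderiv ℝ f y (EuclideanSpace.single b 1) := rfl
    rw [pd, hb, fderiv_clm_apply hd (differentiableAt_const _)]
    simp
  have hsymm := (hf.contDiffAt (isOpen_compl_singleton.mem_nhds hx)).isSymmSndFDerivAt
    (n := (⊤ : ℕ∞)) (by rw [minSmoothness_of_isRCLikeNormedField]; exact WithTop.coe_le_coe.mpr le_top)
  rw [key, key, hsymm]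

lemma diffAt_euler (hf : ContDiffOn ℝ (⊤ : ℕ∞) f {(0 : EuclideanSpace ℝ (Fin m))}ᶜ) (hx : x ≠ 0) :
    DifferentiableAt ℝ (euler f) x := by
  have h1 : euler f = fun y => ∑ k, y k * pd k f y := rfl
  rw [h1]
  exact DifferentiableAt.fun_sum fun k _ => diffAt_coord.fun_mul (diffAt_pd hf hx k)

lemma pd_euler (hf : ContDiffOn ℝ (⊤ : ℕ∞) f {(0 : EuclideanSpace ℝ (Fin m))}ᶜ) (hx : x ≠ 0) :
    pd j (euler f) x = pd j f x + ∑ k, x k * pd j (pd k f) x := by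
  have h1 : euler f = fun y => ∑ k, y k * pd k f y := rfl
  rw [h1, pd_sum _ _ (fun k _ => diffAt_coord.fun_mul (diffAt_pd hf hx k))]
  have h2 : ∀ k : Fin m, pd j (fun y => y k * pd k f y) x
      = (if k = j then 1 else 0) * pd k f x + x k * pd j (pd k f) x := by
    intro k
    rw [pd_mul diffAt_coord (diffAt_pd hf hx k), pd_coord]
  rw [Finset.sum_congr rfl fun k _ => h2 k, Finset.sum_add_distrib]
  congr 1
  simp [ite_mul, Finset.sum_ite_eq', Finset.mem_univ]

lemma pd_DopM2 (hf : ContDiffOn ℝ (⊤ : ℕ∞) f {(0 : EuclideanSpace ℝ (Fin m))}ᶜ) (hx : x ≠ 0) :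
    pd j (DopM2 i f) x =
      2 * x j * pd i f x + ‖x‖ ^ 2 * pd j (pd i f) x
      + (2 - (m : ℝ)) * ((if i = j then 1 else 0) * f x + x i * pd j f x)
      - 2 * ((if i = j then 1 else 0) * euler f x
          + x i * (pd j f x + ∑ k, x k * pd j (pd k f) x)) := by
  have hu : DifferentiableAt ℝ (pd i f) x := diffAt_pd hf hx i
  have hfy : DifferentiableAt ℝ f x := diffAt_f hf hx
  have hE : DifferentiableAt ℝ (euler f) x := diffAt_euler hf hx
  have hc1 : DifferentiableAt ℝ (fun y : EuclideanSpace ℝ (Fin m) => (2 - (m : ℝ)) * y i) x :=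
    diffAt_coord.const_mul _
  have hc2 : DifferentiableAt ℝ (fun y : EuclideanSpace ℝ (Fin m) => 2 * y i) x :=
    diffAt_coord.const_mul _
  have h1 : DopM2 i f = fun y =>
      (‖y‖ ^ 2 * pd i f y + ((2 - (m : ℝ)) * y i) * f y) - (2 * y i) * euler f y := by
    funext y; rw [DopM2]
  rw [h1, pd_sub ((diffAt_normSq.fun_mul hu).fun_add (hc1.fun_mul hfy)) (hc2.fun_mul hE),
    pd_add (diffAt_normSq.fun_mul hu) (hc1.fun_mul hfy),
    pd_mul diffAt_normSq hu, pd_mul hc1 hfy, pd_mul hc2 hE,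
    pd_normSq, pd_const_mul _ diffAt_coord, pd_const_mul _ diffAt_coord, pd_coord,
    pd_euler hf hx]
  ring

end Aux

theorem stmt_5 (m : ℕ) (hm : 1 ≤ m)
    (f : EuclideanSpace ℝ (Fin m) → ℝ)
    (hf : ContDiffOn ℝ (⊤ : ℕ∞) f {(0 : EuclideanSpace ℝ (Fin m))}ᶜ)
    (x : EuclideanSpace ℝ (Fin m)) (hx : x ≠ 0) :
    ∑ i, DopM2 i (DopM2 i f) x = ‖x‖ ^ 4 * ∑ j, pd j (pd j f) x := by
  set β : ℝ := 2 - (m : ℝ) with hβ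
  set r2 : ℝ := ‖x‖ ^ 2 with hr2
  set B : ℝ := euler f x with hB
  set P : ℝ := ∑ k, (x k) ^ 2 with hPdef
  set C : ℝ := ∑ j, x j * ∑ k, x k * pd j (pd k f) x with hCdef
  have hP : P = r2 := by
    rw [hPdef, hr2, EuclideanSpace.norm_eq, Real.sq_sqrt (by positivity)]
    simp [Real.norm_eq_abs, sq_abs]
  -- the Euler derivative of DopM2 i f
  have hQ : ∀ i : Fin m, euler (DopM2 i f) x
      = 2 * P * pd i f x + r2 * (∑ k, x k * pd i (pd k f) x)
        + β * x i * f x + β * x i * B - 2 * x i * B - 2 * x i * (B + C) := by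
    intro i
    have h0 : euler (DopM2 i f) x = ∑ j, x j * pd j (DopM2 i f) x := rfl
    have h1 : ∀ j : Fin m, x j * pd j (DopM2 i f) x
        = (2 * pd i f x) * (x j) ^ 2 + r2 * (x j * pd i (pd j f) x)
          + β * (if i = j then x j * f x else 0) + (β * x i) * (x j * pd j f x)
          - 2 * (if i = j then x j * B else 0) - (2 * x i) * (x j * pd j f x)
          - (2 * x i) * (x j * ∑ k, x k * pd j (pd k f) x) := by
      intro j
      rw [pd_DopM2 hf hx, pd_symm hf hx]
      split_ifs <;> ring
    rw [h0, Finset.sum_congr rfl fun j _ => h1 j]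
    simp only [Finset.sum_sub_distrib, Finset.sum_add_distrib, ← Finset.mul_sum,
      Finset.sum_ite_eq, Finset.mem_univ, if_true]
    have he : ∑ j, x j * pd j f x = B := rfl
    rw [he, ← hPdef, ← hCdef]
    ring
  -- closed form for each summand
  have hfin : ∀ i : Fin m, DopM2 i (DopM2 i f) x
      = r2 ^ 2 * pd i (pd i f) x
        + (2 * β * r2 - 4 * P) * (x i * pd i f x)
        + (β * r2 * f x - 2 * r2 * B)
        + (-4 * r2) * (x i * ∑ k, x k * pd i (pd k f) x)
        + ((β ^ 2 - 2 * β) * f x + (8 - 4 * β) * B + 4 * C) * (x i) ^ 2 := by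
    intro i
    have houter : DopM2 i (DopM2 i f) x
        = r2 * pd i (DopM2 i f) x + β * x i * (DopM2 i f x) - 2 * x i * euler (DopM2 i f) x := rfl
    have hval : DopM2 i f x = r2 * pd i f x + β * x i * f x - 2 * x i * B := rfl
    have hPi : pd i (DopM2 i f) x
        = 2 * x i * pd i f x + r2 * pd i (pd i f) x
          + β * (1 * f x + x i * pd i f x)
          - 2 * (1 * B + x i * (pd i f x + ∑ k, x k * pd i (pd k f) x)) := by
      have := pd_DopM2 (i := i) (j := i) hf hx
      simpa using this
    rw [houter, hval, hPi, hQ i]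
    ring
  rw [Finset.sum_congr rfl fun i _ => hfin i]
  simp only [Finset.sum_add_distrib, ← Finset.mul_sum, Finset.sum_const, Finset.card_univ,
    Fintype.card_fin, nsmul_eq_mul]
  have he : ∑ i, x i * pd i f x = B := rfl
  have hC2 : ∑ i, x i * ∑ k, x k * pd i (pd k f) x = C := rfl
  rw [he, hC2, ← hPdef, hP, hβ, hr2]
  ring
end

section
/- Let m ≥ 1 and define, for i = 1,…,m and smooth f : ℝᵐ \ {0} → ℝ, the operator D_i f(x) = ‖x‖^{4−2m} ∂_i f(x) + (m−2) ‖x‖^{2−2m} x_i f(x) (the parameter choice a = 4m−6, b = m−2, c = 0). Then for every smooth f : ℝᵐ \ {0} → ℝ and every x ≠ 0, Σ_{i=1}^m D_i(D_i f)(x) = ‖x‖^{8−4m} Δf(x). (One of the solutions, for trivial multiplicity function k = 0, of the system Σ_i D_i² = r^{2−a}Δ.) -/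
open Real

/-- The operator `D_i f (x) = ‖x‖^{4-2m} ∂_i f(x) + (m-2) ‖x‖^{2-2m} x_i f(x)`,
the parameter choice `a = 4m-6`, `b = m-2`, `c = 0`. -/
noncomputable def DopSpec {m : ℕ} (i : Fin m)
    (f : EuclideanSpace ℝ (Fin m) → ℝ) (x : EuclideanSpace ℝ (Fin m)) : ℝ :=
  ‖x‖ ^ (4 - 2 * (m : ℝ)) * pd i f x + ((m : ℝ) - 2) * ‖x‖ ^ (2 - 2 * (m : ℝ)) * x i * f x

lemma myNormRpow {m : ℕ} (c : ℝ) {x : EuclideanSpace ℝ (Fin m)} (hx : x ≠ 0) :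
    HasFDerivAt (fun y : EuclideanSpace ℝ (Fin m) => ‖y‖ ^ c)
      ((c * ‖x‖ ^ (c - 2)) • (innerSL ℝ x)) x := by
  have hr : (0:ℝ) < ‖x‖ := norm_pos_iff.2 hx
  have h1 : HasFDerivAt (fun y : EuclideanSpace ℝ (Fin m) => ‖y‖ ^ 2)
      (2 • (innerSL ℝ x)) x := (hasStrictFDerivAt_norm_sq x).hasFDerivAt
  have h2 : HasDerivAt (fun t : ℝ => t ^ (c / 2))
      ((c / 2) * (‖x‖ ^ 2) ^ (c / 2 - 1)) (‖x‖ ^ 2) :=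
    Real.hasDerivAt_rpow_const (Or.inl (by positivity))
  have h3 := h2.comp_hasFDerivAt x h1
  have hfun : (fun y : EuclideanSpace ℝ (Fin m) => (‖y‖ ^ 2) ^ (c / 2))
      = fun y => ‖y‖ ^ c := by
    funext y
    rw [← Real.rpow_natCast ‖y‖ 2, ← Real.rpow_mul (norm_nonneg y)]
    push_cast
    congr 1
    ring
  simp only [Function.comp_def] at h3
  rw [hfun] at h3
  have hsq : ((‖x‖ ^ 2 : ℝ)) ^ (c / 2 - 1) = ‖x‖ ^ (c - 2) := by
    rw [← Real.rpow_natCast ‖x‖ 2, ← Real.rpow_mul (norm_nonneg x)]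
    congr 1
    push_cast
    ring
  refine h3.congr_fderiv ?_
  rw [hsq]
  ext y
  simp only [ContinuousLinearMap.smul_apply, smul_eq_mul, smul_smul]
  ring

lemma key {m : ℕ} {f : EuclideanSpace ℝ (Fin m) → ℝ}
    (hf : ContDiffOn ℝ (⊤ : ℕ∞) f {(0 : EuclideanSpace ℝ (Fin m))}ᶜ)
    (i : Fin m) {x : EuclideanSpace ℝ (Fin m)} (hx : x ≠ 0) :
    DopSpec i (DopSpec i f) x
      = ‖x‖ ^ (8 - 4 * (m : ℝ)) * pd i (pd i f) x
        + ((m : ℝ) - 2) * (‖x‖ ^ (6 - 4 * (m : ℝ))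
            - (m : ℝ) * ‖x‖ ^ (4 - 4 * (m : ℝ)) * (x i) ^ 2) * f x := by
  have hr : (0:ℝ) < ‖x‖ := norm_pos_iff.2 hx
  have hs : IsOpen ({(0 : EuclideanSpace ℝ (Fin m))}ᶜ) := isOpen_compl_singleton
  have hxs : x ∈ ({(0 : EuclideanSpace ℝ (Fin m))}ᶜ : Set (EuclideanSpace ℝ (Fin m))) := by simpa using hx
  have hFf : HasFDerivAt f (fderiv ℝ f x) x :=
    ((hf.differentiableOn (by simp)).differentiableAt (hs.mem_nhds hxs)).hasFDerivAt
  have hf' : ContDiffOn ℝ (⊤ : ℕ∞) (fun y => fderiv ℝ f y) {(0 : EuclideanSpace ℝ (Fin m))}ᶜ :=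
    hf.fderiv_of_isOpen hs (by simp)
  have hD : HasFDerivAt (fun y => fderiv ℝ f y)
      (fderiv ℝ (fun y => fderiv ℝ f y) x) x :=
    ((hf'.differentiableOn (by simp)).differentiableAt (hs.mem_nhds hxs)).hasFDerivAt
  set D := fderiv ℝ (fun y => fderiv ℝ f y) x with hDdef
  have hPi : HasFDerivAt (pd i f)
      ((ContinuousLinearMap.apply ℝ ℝ
        ((EuclideanSpace.single i 1 : EuclideanSpace ℝ (Fin m)))).comp D) x :=
    ((ContinuousLinearMap.apply ℝ ℝ
        ((EuclideanSpace.single i 1 : EuclideanSpace ℝ (Fin m)))).hasFDerivAt).comp x hD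
  have h2nd : pd i (pd i f) x = D (EuclideanSpace.single i 1) (EuclideanSpace.single i 1) := by
    rw [pd, hPi.fderiv]
    rfl
  have hco : HasFDerivAt (fun y : EuclideanSpace ℝ (Fin m) => y i)
      (EuclideanSpace.proj i : EuclideanSpace ℝ (Fin m) →L[ℝ] ℝ) x :=
    by
      have h := (EuclideanSpace.proj (𝕜 := ℝ) i).hasFDerivAt (x := x)
      have : ⇑(EuclideanSpace.proj (𝕜 := ℝ) i : EuclideanSpace ℝ (Fin m) →L[ℝ] ℝ) = fun y : EuclideanSpace ℝ (Fin m) => y i := rfl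
      rwa [this] at h
  have hα := myNormRpow (4 - 2 * (m : ℝ)) hx
  have hγ := myNormRpow (2 - 2 * (m : ℝ)) hx
  have hDg : DopSpec i f = fun y => ‖y‖ ^ (4 - 2 * (m : ℝ)) * pd i f y
      + ((m : ℝ) - 2) * ‖y‖ ^ (2 - 2 * (m : ℝ)) * y i * f y := funext fun y => rfl
  have hg := (hα.mul hPi).add (((hγ.const_mul ((m : ℝ) - 2)).mul hco).mul hFf)
  have hval : pd i (DopSpec i f) x
      = ‖x‖ ^ (4 - 2 * (m : ℝ)) * (D (EuclideanSpace.single i 1) (EuclideanSpace.single i 1))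
        + pd i f x * ((4 - 2 * (m : ℝ)) * ‖x‖ ^ (4 - 2 * (m : ℝ) - 2) * x i)
        + ((((m : ℝ) - 2) * ‖x‖ ^ (2 - 2 * (m : ℝ))) * x i * pd i f x
          + f x * (((m : ℝ) - 2) * ‖x‖ ^ (2 - 2 * (m : ℝ))
            + x i * (((m : ℝ) - 2) * ((2 - 2 * (m : ℝ)) * ‖x‖ ^ (2 - 2 * (m : ℝ) - 2) * x i)))) := by
    rw [hDg, pd, (show HasFDerivAt (fun y => ‖y‖ ^ (4 - 2 * (m : ℝ)) * pd i f y
      + ((m : ℝ) - 2) * ‖y‖ ^ (2 - 2 * (m : ℝ)) * y i * f y) _ x from hg).fderiv]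
    simp [EuclideanSpace.inner_single_right, EuclideanSpace.single_apply, real_inner_comm]
    rw [show (fderiv ℝ f x) (EuclideanSpace.single i 1) = pd i f x from rfl]
    ring
  set t := ‖x‖ ^ (-(2 * (m : ℝ))) with ht
  have e1 : ‖x‖ ^ (4 - 2 * (m : ℝ)) = ‖x‖ ^ (4 : ℕ) * t := by
    rw [show (4 - 2 * (m : ℝ)) = ((4 : ℕ) : ℝ) + (-(2 * (m : ℝ))) by push_cast; ring,
      Real.rpow_add hr, Real.rpow_natCast]
  have e2 : ‖x‖ ^ (2 - 2 * (m : ℝ)) = ‖x‖ ^ (2 : ℕ) * t := by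
    rw [show (2 - 2 * (m : ℝ)) = ((2 : ℕ) : ℝ) + (-(2 * (m : ℝ))) by push_cast; ring,
      Real.rpow_add hr, Real.rpow_natCast]
  have e3 : ‖x‖ ^ (4 - 2 * (m : ℝ) - 2) = ‖x‖ ^ (2 : ℕ) * t := by
    rw [show (4 - 2 * (m : ℝ) - 2) = ((2 : ℕ) : ℝ) + (-(2 * (m : ℝ))) by push_cast; ring,
      Real.rpow_add hr, Real.rpow_natCast]
  have e4 : ‖x‖ ^ (2 - 2 * (m : ℝ) - 2) = t := by
    rw [show (2 - 2 * (m : ℝ) - 2) = (-(2 * (m : ℝ))) by ring]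
  have e5 : ‖x‖ ^ (8 - 4 * (m : ℝ)) = ‖x‖ ^ (8 : ℕ) * t ^ 2 := by
    rw [show (8 - 4 * (m : ℝ)) = ((8 : ℕ) : ℝ) + (-(2 * (m : ℝ))) + (-(2 * (m : ℝ)))
      by push_cast; ring, Real.rpow_add hr, Real.rpow_add hr, Real.rpow_natCast]
    ring
  have e6 : ‖x‖ ^ (6 - 4 * (m : ℝ)) = ‖x‖ ^ (6 : ℕ) * t ^ 2 := by
    rw [show (6 - 4 * (m : ℝ)) = ((6 : ℕ) : ℝ) + (-(2 * (m : ℝ))) + (-(2 * (m : ℝ)))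
      by push_cast; ring, Real.rpow_add hr, Real.rpow_add hr, Real.rpow_natCast]
    ring
  have e7 : ‖x‖ ^ (4 - 4 * (m : ℝ)) = ‖x‖ ^ (4 : ℕ) * t ^ 2 := by
    rw [show (4 - 4 * (m : ℝ)) = ((4 : ℕ) : ℝ) + (-(2 * (m : ℝ))) + (-(2 * (m : ℝ)))
      by push_cast; ring, Real.rpow_add hr, Real.rpow_add hr, Real.rpow_natCast]
    ring
  simp only [DopSpec]
  rw [hval, h2nd, e1, e2, e3, e4, e5, e6, e7]
  ring

theorem stmt_6 (m : ℕ) (hm : 1 ≤ m)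
    (f : EuclideanSpace ℝ (Fin m) → ℝ)
    (hf : ContDiffOn ℝ (⊤ : ℕ∞) f {(0 : EuclideanSpace ℝ (Fin m))}ᶜ)
    (x : EuclideanSpace ℝ (Fin m)) (hx : x ≠ 0) :
    ∑ i, DopSpec i (DopSpec i f) x
      = ‖x‖ ^ (8 - 4 * (m : ℝ)) * ∑ j, pd j (pd j f) x := by
  have hr : (0:ℝ) < ‖x‖ := norm_pos_iff.2 hx
  have hsum : ∑ i, (x i) ^ 2 = ‖x‖ ^ 2 := by
    rw [EuclideanSpace.norm_eq, Real.sq_sqrt (by positivity)]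
    simp [sq_abs]
  rw [Finset.sum_congr rfl fun i _ => key hf i hx, Finset.sum_add_distrib, ← Finset.mul_sum]
  have hzero : ∑ i : Fin m, ((m : ℝ) - 2) * (‖x‖ ^ (6 - 4 * (m : ℝ))
      - (m : ℝ) * ‖x‖ ^ (4 - 4 * (m : ℝ)) * (x i) ^ 2) * f x = 0 := by
    have expand : ∀ i : Fin m, ((m : ℝ) - 2) * (‖x‖ ^ (6 - 4 * (m : ℝ))
        - (m : ℝ) * ‖x‖ ^ (4 - 4 * (m : ℝ)) * (x i) ^ 2) * f x
        = ((m : ℝ) - 2) * ‖x‖ ^ (6 - 4 * (m : ℝ)) * f x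
          - ((m : ℝ) - 2) * (m : ℝ) * ‖x‖ ^ (4 - 4 * (m : ℝ)) * f x * (x i) ^ 2 :=
      fun i => by ring
    rw [Finset.sum_congr rfl fun i _ => expand i, Finset.sum_sub_distrib,
      Finset.sum_const, ← Finset.mul_sum, hsum, Finset.card_univ, Fintype.card_fin,
      nsmul_eq_mul]
    have hBC : ‖x‖ ^ (4 - 4 * (m : ℝ)) * ‖x‖ ^ 2 = ‖x‖ ^ (6 - 4 * (m : ℝ)) := by
      rw [← Real.rpow_natCast ‖x‖ 2, ← Real.rpow_add hr]
      congr 1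
      push_cast
      ring
    linear_combination (-((m : ℝ) * ((m : ℝ) - 2) * f x)) * hBC
  rw [hzero, add_zero]
end

section
/- Assume a > 0 and c = 2/a − 1. Then for every smooth f : ℝᵐ \ {0} → ℝ, every index i and every x ≠ 0: (1) Σ_{j=1}^m D_j(D_j(X_i f))(x) − X_i( Σ_{j=1}^m D_j(D_j f) )(x) = a(1+c) D_i f(x); and (2) Σ_{j=1}^m D_j(D_j( ‖·‖^a f ))(x) − ‖x‖^a Σ_{j=1}^m D_j(D_j f)(x) = 2a(1+c)² ( E f(x) + (δ/2) f(x) ). (Componentwise scalar form, for k = 0 and scalar D², of the relations [D², x_a] = −a(1+c)D and [D², x_a²] = 2a(1+c)²(E + δ/2) of the osp(1|2) theorem.) -/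
open Real
open scoped ContDiff

namespace Aux

variable {m : ℕ}

/-- Smooth away from the origin. -/
abbrev Sm (f : EuclideanSpace ℝ (Fin m) → ℝ) : Prop :=
  ContDiffOn ℝ ∞ f {(0 : EuclideanSpace ℝ (Fin m))}ᶜ

lemma isOpenU : IsOpen ({(0 : EuclideanSpace ℝ (Fin m))}ᶜ : Set (EuclideanSpace ℝ (Fin m))) :=
  isOpen_compl_singleton

lemma smCD {f : EuclideanSpace ℝ (Fin m) → ℝ} (hf : Sm f)
    {x : EuclideanSpace ℝ (Fin m)} (hx : x ≠ 0) : ContDiffAt ℝ ∞ f x :=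
  hf.contDiffAt (isOpenU.mem_nhds (by simpa using hx))

lemma smD {f : EuclideanSpace ℝ (Fin m) → ℝ} (hf : Sm f)
    {x : EuclideanSpace ℝ (Fin m)} (hx : x ≠ 0) : DifferentiableAt ℝ f x :=
  (smCD hf hx).differentiableAt (by simp)

lemma sm_rpow (α : ℝ) : Sm (fun y : EuclideanSpace ℝ (Fin m) => ‖y‖ ^ α) := by
  intro x hx
  have hx' : x ≠ 0 := by simpa using hx
  exact (((contDiffAt_norm ℝ hx').rpow_const_of_ne
    (norm_ne_zero_iff.2 hx'))).contDiffWithinAt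

lemma sm_coord (i : Fin m) : Sm (fun y : EuclideanSpace ℝ (Fin m) => y i) :=
  (EuclideanSpace.proj (𝕜 := ℝ) i).contDiff.contDiffOn

lemma smMul {f g : EuclideanSpace ℝ (Fin m) → ℝ} (hf : Sm f) (hg : Sm g) :
    Sm (fun y => f y * g y) := ContDiffOn.mul hf hg

lemma smAdd {f g : EuclideanSpace ℝ (Fin m) → ℝ} (hf : Sm f) (hg : Sm g) :
    Sm (fun y => f y + g y) := ContDiffOn.add hf hg

lemma smCMul {f : EuclideanSpace ℝ (Fin m) → ℝ} (hf : Sm f) (c : ℝ) :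
    Sm (fun y => c * f y) := contDiffOn_const.mul hf

lemma smSum {ι : Type*} (s : Finset ι) {f : ι → EuclideanSpace ℝ (Fin m) → ℝ}
    (hf : ∀ i ∈ s, Sm (f i)) : Sm (fun y => ∑ i ∈ s, f i y) :=
  ContDiffOn.sum hf

lemma smPd {f : EuclideanSpace ℝ (Fin m) → ℝ} (hf : Sm f) (j : Fin m) : Sm (pd j f) := by
  have h1 : ContDiffOn ℝ ∞ (fun x => fderiv ℝ f x)
      {(0 : EuclideanSpace ℝ (Fin m))}ᶜ :=
    hf.fderiv_of_isOpen isOpenU (by exact_mod_cast le_top)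
  exact h1.clm_apply contDiffOn_const

lemma smEuler {f : EuclideanSpace ℝ (Fin m) → ℝ} (hf : Sm f) : Sm (euler f) := by
  unfold _root_.euler
  exact smSum Finset.univ fun j _ => smMul (sm_coord j) (smPd hf j)

variable {f g h : EuclideanSpace ℝ (Fin m) → ℝ} {x : EuclideanSpace ℝ (Fin m)}

lemma pd_congr (hfg : f =ᶠ[nhds x] g) (j : Fin m) : pd j f x = pd j g x := by
  unfold pd; rw [Filter.EventuallyEq.fderiv_eq hfg]

lemma eventuallyEq_of_ne (hx : x ≠ 0)
    (H : ∀ y : EuclideanSpace ℝ (Fin m), y ≠ 0 → f y = g y) : f =ᶠ[nhds x] g := by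
  filter_upwards [isOpenU.mem_nhds (show x ∈ _ by simpa using hx)] with y hy
  exact H y (by simpa using hy)

lemma pd_add (hf : DifferentiableAt ℝ f x) (hg : DifferentiableAt ℝ g x) (j : Fin m) :
    pd j (fun y => f y + g y) x = pd j f x + pd j g x := by
  unfold pd; rw [fderiv_fun_add hf hg]; simp

lemma pd_const_mul (hf : DifferentiableAt ℝ f x) (c : ℝ) (j : Fin m) :
    pd j (fun y => c * f y) x = c * pd j f x := by
  unfold pd; rw [fderiv_const_mul hf]; simp

lemma pd_mul (hf : DifferentiableAt ℝ f x) (hg : DifferentiableAt ℝ g x) (j : Fin m) :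
    pd j (fun y => f y * g y) x = pd j f x * g x + f x * pd j g x := by
  unfold pd; rw [fderiv_fun_mul hf hg]; simp; ring

lemma pd_sum {ι : Type*} (s : Finset ι) {A : ι → EuclideanSpace ℝ (Fin m) → ℝ}
    (hA : ∀ i ∈ s, DifferentiableAt ℝ (A i) x) (j : Fin m) :
    pd j (fun y => ∑ i ∈ s, A i y) x = ∑ i ∈ s, pd j (A i) x := by
  unfold pd; rw [fderiv_fun_sum hA]; simp

lemma proj_single (k j : Fin m) :
    (EuclideanSpace.proj (𝕜 := ℝ) k : EuclideanSpace ℝ (Fin m) →L[ℝ] ℝ)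
      (EuclideanSpace.single j (1 : ℝ)) = if j = k then 1 else 0 := by
  have h : (EuclideanSpace.proj (𝕜 := ℝ) k : EuclideanSpace ℝ (Fin m) →L[ℝ] ℝ)
      (EuclideanSpace.single j (1 : ℝ))
      = (EuclideanSpace.single j (1 : ℝ) : EuclideanSpace ℝ (Fin m)) k := rfl
  rw [h, EuclideanSpace.single_apply]
  rcases eq_or_ne j k with h2 | h2
  · simp [h2]
  · simp [h2, Ne.symm h2]

lemma pd_coord (l j : Fin m) : pd j (fun y : EuclideanSpace ℝ (Fin m) => y l) x
    = if j = l then 1 else 0 := by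
  unfold pd
  have h1 : (fun y : EuclideanSpace ℝ (Fin m) => y l)
      = (EuclideanSpace.proj (𝕜 := ℝ) l : EuclideanSpace ℝ (Fin m) →L[ℝ] ℝ) := rfl
  rw [h1, ContinuousLinearMap.fderiv, proj_single]

lemma pd_rpow (α : ℝ) (hx : x ≠ 0) (j : Fin m) :
    pd j (fun y : EuclideanSpace ℝ (Fin m) => ‖y‖ ^ α) x = α * ‖x‖ ^ (α - 2) * x j := by
  have hnsq : ∀ y : EuclideanSpace ℝ (Fin m), ∑ k, (y k) ^ 2 = ‖y‖ ^ (2 : ℕ) := by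
    intro y
    rw [EuclideanSpace.norm_eq, Real.sq_sqrt (by positivity)]
    exact Finset.sum_congr rfl fun k _ => by rw [Real.norm_eq_abs, sq_abs]
  have key : ∀ y : EuclideanSpace ℝ (Fin m), ‖y‖ ^ α = (∑ k, (y k) ^ 2) ^ (α / 2) := by
    intro y
    rw [hnsq, ← Real.rpow_natCast ‖y‖ 2, ← Real.rpow_mul (norm_nonneg y)]
    congr 1; ring
  have hL : HasFDerivAt (fun y : EuclideanSpace ℝ (Fin m) => ∑ k, (y k) ^ 2)
      (∑ k, ((2 : ℝ) * x k) • (EuclideanSpace.proj (𝕜 := ℝ) k :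
        EuclideanSpace ℝ (Fin m) →L[ℝ] ℝ)) x := by
    apply HasFDerivAt.fun_sum
    intro k _
    have h1 : HasDerivAt (fun t : ℝ => t ^ 2) (2 * x k) (x k) := by
      simpa using hasDerivAt_pow 2 (x k)
    exact h1.comp_hasFDerivAt x (EuclideanSpace.proj (𝕜 := ℝ) k).hasFDerivAt
  have hne : (∑ k, (x k) ^ 2) ≠ 0 := by
    rw [hnsq]; exact pow_ne_zero _ (norm_ne_zero_iff.2 hx)
  have h2 : HasDerivAt (fun t : ℝ => t ^ (α / 2))
      ((α / 2) * (∑ k, (x k) ^ 2) ^ (α / 2 - 1)) (∑ k, (x k) ^ 2) :=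
    Real.hasDerivAt_rpow_const (Or.inl hne)
  have h3 := h2.comp_hasFDerivAt x hL
  have h4 : pd j (fun y : EuclideanSpace ℝ (Fin m) => ‖y‖ ^ α) x
      = pd j (fun y => (∑ k, (y k) ^ 2) ^ (α / 2)) x := by
    rw [funext key]
  rw [h4]
  unfold pd
  have h3' : HasFDerivAt (fun y : EuclideanSpace ℝ (Fin m) => (∑ k, (y k) ^ 2) ^ (α / 2))
      ((α / 2 * (∑ k, (x k) ^ 2) ^ (α / 2 - 1)) •
        ∑ k, ((2 : ℝ) * x k) • (EuclideanSpace.proj (𝕜 := ℝ) k :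
          EuclideanSpace ℝ (Fin m) →L[ℝ] ℝ)) x := h3
  rw [h3'.fderiv]
  simp only [ContinuousLinearMap.coe_smul', Pi.smul_apply, ContinuousLinearMap.coe_sum',
    Finset.sum_apply, proj_single, smul_eq_mul, mul_ite, mul_one, mul_zero]
  rw [Finset.sum_ite_eq Finset.univ j fun k => 2 * x k]
  simp only [Finset.mem_univ, if_true]
  have h5 : (∑ k, (x k) ^ 2) ^ (α / 2 - 1) = ‖x‖ ^ (α - 2) := by
    rw [hnsq, ← Real.rpow_natCast ‖x‖ 2, ← Real.rpow_mul (norm_nonneg x)]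
    congr 1; ring
  rw [h5]; ring

/-! ### Shape lemmas -/

lemma sm_rh (α : ℝ) (hh : Sm h) : Sm (fun y => ‖y‖ ^ α * h y) :=
  smMul (sm_rpow α) hh

lemma sm_xh (l : Fin m) (hh : Sm h) : Sm (fun y => y l * h y) :=
  smMul (sm_coord l) hh

lemma sm_rxh (α : ℝ) (l : Fin m) (hh : Sm h) : Sm (fun y => ‖y‖ ^ α * (y l * h y)) :=
  smMul (sm_rpow α) (sm_xh l hh)

lemma pd_rh (α : ℝ) (hh : Sm h) (hx : x ≠ 0) (k : Fin m) :
    pd k (fun y => ‖y‖ ^ α * h y) x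
      = α * ‖x‖ ^ (α - 2) * x k * h x + ‖x‖ ^ α * pd k h x := by
  rw [pd_mul (smD (sm_rpow α) hx) (smD hh hx), pd_rpow α hx]

lemma pd_xh (l : Fin m) (hh : Sm h) (hx : x ≠ 0) (k : Fin m) :
    pd k (fun y => y l * h y) x = (if k = l then 1 else 0) * h x + x l * pd k h x := by
  rw [pd_mul (smD (sm_coord l) hx) (smD hh hx), pd_coord]

lemma pd_rxh (α : ℝ) (l : Fin m) (hh : Sm h) (hx : x ≠ 0) (k : Fin m) :
    pd k (fun y => ‖y‖ ^ α * (y l * h y)) x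
      = α * ‖x‖ ^ (α - 2) * x k * (x l * h x)
        + ‖x‖ ^ α * ((if k = l then 1 else 0) * h x + x l * pd k h x) := by
  rw [pd_mul (smD (sm_rpow α) hx) (smD (sm_xh l hh) hx), pd_rpow α hx, pd_xh l hh hx]

/-! ### Sum helpers -/

lemma nsq_eq (y : EuclideanSpace ℝ (Fin m)) : ∑ k, y k * y k = ‖y‖ ^ (2 : ℝ) := by
  have h1 : ∑ k, y k * y k = ∑ k, (y k) ^ 2 := by
    exact Finset.sum_congr rfl fun k _ => (sq (y k)).symm ▸ by ring
  rw [h1, EuclideanSpace.norm_eq]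
  rw [show ((2:ℝ)) = ((2:ℕ):ℝ) by norm_num, Real.rpow_natCast]
  rw [Real.sq_sqrt (by positivity)]
  exact Finset.sum_congr rfl fun k _ => by rw [Real.norm_eq_abs, sq_abs]

lemma sum_ite_pick (l : Fin m) (F : Fin m → ℝ) :
    ∑ j, (if j = l then (1:ℝ) else 0) * F j = F l := by
  simp [ite_mul, Finset.sum_ite_eq']

lemma sum_ite_pick' (l : Fin m) (F : Fin m → ℝ) :
    ∑ j, (if l = j then (1:ℝ) else 0) * F j = F l := by
  simp [ite_mul, Finset.sum_ite_eq]

lemma rpow_collapse (hx : x ≠ 0) (α : ℝ) : ‖x‖ ^ (α - 2) * ‖x‖ ^ (2:ℝ) = ‖x‖ ^ α := by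
  rw [← Real.rpow_add (norm_pos_iff.2 hx)]; norm_num

lemma euler_rh (α : ℝ) (hh : Sm h) (hx : x ≠ 0) :
    euler (fun y => ‖y‖ ^ α * h y) x = α * ‖x‖ ^ α * h x + ‖x‖ ^ α * euler h x := by
  unfold euler
  have step : ∀ k ∈ Finset.univ, x k * pd k (fun y => ‖y‖ ^ α * h y) x
      = α * ‖x‖ ^ (α-2) * h x * (x k * x k) + ‖x‖ ^ α * (x k * pd k h x) := by
    intro k _; rw [pd_rh α hh hx k]; ring
  rw [Finset.sum_congr rfl step, Finset.sum_add_distrib, ← Finset.mul_sum, ← Finset.mul_sum,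
    nsq_eq]
  linear_combination (α * h x) * rpow_collapse hx α

lemma euler_rxh (α : ℝ) (l : Fin m) (hh : Sm h) (hx : x ≠ 0) :
    euler (fun y => ‖y‖ ^ α * (y l * h y)) x
      = α * ‖x‖ ^ α * (x l * h x) + ‖x‖ ^ α * (x l * h x + x l * euler h x) := by
  unfold euler
  have step : ∀ k ∈ Finset.univ, x k * pd k (fun y => ‖y‖ ^ α * (y l * h y)) x
      = α * ‖x‖ ^ (α-2) * (x l * h x) * (x k * x k)
        + ‖x‖ ^ α * h x * ((if k = l then 1 else 0) * x k)
        + ‖x‖ ^ α * x l * (x k * pd k h x) := by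
    intro k _; rw [pd_rxh α l hh hx k]; ring
  rw [Finset.sum_congr rfl step, Finset.sum_add_distrib, Finset.sum_add_distrib,
    ← Finset.mul_sum, ← Finset.mul_sum, ← Finset.mul_sum, nsq_eq, sum_ite_pick l (fun k => x k)]
  linear_combination (α * (x l * h x)) * rpow_collapse hx α

noncomputable def Qf (g : EuclideanSpace ℝ (Fin m) → ℝ) (x : EuclideanSpace ℝ (Fin m)) : ℝ :=
  ∑ j, ∑ k, x j * x k * pd j (pd k g) x

noncomputable def lapf (g : EuclideanSpace ℝ (Fin m) → ℝ) (x : EuclideanSpace ℝ (Fin m)) : ℝ :=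
  ∑ j, pd j (pd j g) x

lemma sum_mul_inner (g : EuclideanSpace ℝ (Fin m) → ℝ) :
    ∑ k, x k * ∑ l, x l * pd k (pd l g) x = Qf g x := by
  unfold Qf
  exact Finset.sum_congr rfl fun k _ => by
    rw [Finset.mul_sum]
    exact Finset.sum_congr rfl fun l _ => by ring

lemma pd_euler (hg : Sm g) (hx : x ≠ 0) (k : Fin m) :
    pd k (euler g) x = pd k g x + ∑ l, x l * pd k (pd l g) x := by
  have h0 : euler g = fun y => ∑ l, (fun l (y : EuclideanSpace ℝ (Fin m)) => y l * pd l g y) l y :=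
    rfl
  rw [h0, pd_sum Finset.univ (fun l _ => smD (sm_xh l (smPd hg l)) hx) k]
  rw [Finset.sum_congr rfl (fun l _ => pd_xh l (smPd hg l) hx k), Finset.sum_add_distrib,
    sum_ite_pick' k (fun l => pd l g x)]

lemma Dop_eq (a b c : ℝ) (j : Fin m) (g : EuclideanSpace ℝ (Fin m) → ℝ) :
    Dop a b c j g = fun y => ‖y‖ ^ (1 - a/2) * pd j g y
      + (b * (‖y‖ ^ (-(a/2) - 1) * (y j * g y)) + c * (‖y‖ ^ (-(a/2) - 1) * (y j * euler g y))) := by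
  funext y; unfold Dop; ring

lemma sm_Dop (a b c : ℝ) (hg : Sm g) (j : Fin m) : Sm (Dop a b c j g) := by
  rw [Dop_eq]
  exact smAdd (sm_rh _ (smPd hg j))
    (smAdd (smCMul (sm_rxh _ _ hg) b) (smCMul (sm_rxh _ _ (smEuler hg)) c))

lemma pd_Dop (a b c : ℝ) (hg : Sm g) (hx : x ≠ 0) (j k : Fin m) :
    pd k (Dop a b c j g) x
      = ((1-a/2) * ‖x‖ ^ (1-a/2-2) * x k * pd j g x + ‖x‖ ^ (1-a/2) * pd k (pd j g) x)
        + (b * ((-(a/2)-1) * ‖x‖ ^ (-(a/2)-1-2) * x k * (x j * g x)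
             + ‖x‖ ^ (-(a/2)-1) * ((if k = j then 1 else 0) * g x + x j * pd k g x))
         + c * ((-(a/2)-1) * ‖x‖ ^ (-(a/2)-1-2) * x k * (x j * euler g x)
             + ‖x‖ ^ (-(a/2)-1) * ((if k = j then 1 else 0) * euler g x
                 + x j * (pd k g x + ∑ l, x l * pd k (pd l g) x)))) := by
  rw [Dop_eq]
  rw [pd_add (smD (sm_rh _ (smPd hg j)) hx)
    (smD (smAdd (smCMul (sm_rxh _ _ hg) b) (smCMul (sm_rxh _ _ (smEuler hg)) c)) hx) k]
  rw [pd_add (smD (smCMul (sm_rxh _ _ hg) b) hx) (smD (smCMul (sm_rxh _ _ (smEuler hg)) c) hx) k]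
  rw [pd_const_mul (smD (sm_rxh _ _ hg) hx) b k,
    pd_const_mul (smD (sm_rxh _ _ (smEuler hg)) hx) c k]
  rw [pd_rh _ (smPd hg j) hx k, pd_rxh _ _ hg hx k, pd_rxh _ _ (smEuler hg) hx k]
  rw [pd_euler hg hx k]

lemma sum_mul_inner' (g : EuclideanSpace ℝ (Fin m) → ℝ) :
    ∑ j, x j * ∑ k, x k * pd k (pd j g) x = Qf g x := by
  unfold Qf
  calc ∑ j, x j * ∑ k, x k * pd k (pd j g) x
      = ∑ j, ∑ k, x k * x j * pd k (pd j g) x := by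
        exact Finset.sum_congr rfl fun j _ => by
          rw [Finset.mul_sum]; exact Finset.sum_congr rfl fun k _ => by ring
    _ = ∑ j, ∑ k, x j * x k * pd j (pd k g) x := Finset.sum_comm

lemma euler_Dop (a b c : ℝ) (hg : Sm g) (hx : x ≠ 0) (j : Fin m) :
    euler (Dop a b c j g) x
      = (1-a/2) * ‖x‖ ^ (1-a/2) * pd j g x + ‖x‖ ^ (1-a/2) * (∑ k, x k * pd k (pd j g) x)
        + b * ((-(a/2)-1) * ‖x‖ ^ (-(a/2)-1) * (x j * g x)
            + ‖x‖ ^ (-(a/2)-1) * (x j * g x + x j * euler g x))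
        + c * ((-(a/2)-1) * ‖x‖ ^ (-(a/2)-1) * (x j * euler g x)
            + ‖x‖ ^ (-(a/2)-1) * (x j * euler g x + x j * (euler g x + Qf g x))) := by
  have h0 : euler (Dop a b c j g) x = ∑ k, x k * pd k (Dop a b c j g) x := rfl
  rw [h0]
  have step : ∀ k ∈ Finset.univ, x k * pd k (Dop a b c j g) x
      = ((1-a/2) * ‖x‖ ^ (1-a/2-2) * pd j g x
          + b * (-(a/2)-1) * ‖x‖ ^ (-(a/2)-1-2) * (x j * g x)
          + c * (-(a/2)-1) * ‖x‖ ^ (-(a/2)-1-2) * (x j * euler g x)) * (x k * x k)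
        + (b * ‖x‖ ^ (-(a/2)-1) * g x + c * ‖x‖ ^ (-(a/2)-1) * euler g x)
            * ((if k = j then 1 else 0) * x k)
        + ((b + c) * ‖x‖ ^ (-(a/2)-1) * x j) * (x k * pd k g x)
        + (‖x‖ ^ (1-a/2)) * (x k * pd k (pd j g) x)
        + (c * ‖x‖ ^ (-(a/2)-1) * x j) * (x k * ∑ l, x l * pd k (pd l g) x) := by
    intro k _
    rw [pd_Dop a b c hg hx j k]; ring
  rw [Finset.sum_congr rfl step]
  simp only [Finset.sum_add_distrib, ← Finset.mul_sum]
  rw [nsq_eq, sum_ite_pick j (fun k => x k), sum_mul_inner g]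
  have he : (∑ k, x k * pd k g x) = euler g x := rfl
  rw [he]
  linear_combination ((1-a/2) * pd j g x) * rpow_collapse hx (1-a/2)
    + ((-(a/2)-1) * (b * (x j * g x) + c * (x j * euler g x))) * rpow_collapse hx (-(a/2)-1)

lemma rpow_split (hx : x ≠ 0) (u v : ℝ) : ‖x‖ ^ (u + v) = ‖x‖ ^ u * ‖x‖ ^ v :=
  Real.rpow_add (norm_pos_iff.2 hx) u v

set_option maxHeartbeats 2000000 in
lemma master (a b c : ℝ) (hg : Sm g) (hx : x ≠ 0) :
    ∑ j, Dop a b c j (Dop a b c j g) x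
      = ‖x‖ ^ (2-a) * lapf g x
        + ‖x‖ ^ (-a) *
          (((m + (-(a/2)-1) + b + c * ((-(a/2)-1)+1)) * b) * g x
            + (((1-a/2) + b + c*(1-a/2) - c) + c + (m + (-(a/2)-1) + b + c * ((-(a/2)-1)+1)) * c
                + (1+c)*b + (1+c)*c) * euler g x
            + (c*(2+c)) * Qf g x) := by
  have step : ∀ j ∈ Finset.univ, Dop a b c j (Dop a b c j g) x
      = (b * (-(a/2)-1) * (‖x‖ ^ (1-a/2) * ‖x‖ ^ (-(a/2)-1-2)) * g x
          + c * (-(a/2)-1) * (‖x‖ ^ (1-a/2) * ‖x‖ ^ (-(a/2)-1-2)) * euler g x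
          + b * b * (‖x‖ ^ (-(a/2)-1) * ‖x‖ ^ (-(a/2)-1)) * g x
          + b * c * (‖x‖ ^ (-(a/2)-1) * ‖x‖ ^ (-(a/2)-1)) * euler g x
          + c * b * (-(a/2)-1) * (‖x‖ ^ (-(a/2)-1) * ‖x‖ ^ (-(a/2)-1)) * g x
          + c * b * (‖x‖ ^ (-(a/2)-1) * ‖x‖ ^ (-(a/2)-1)) * g x
          + c * b * (‖x‖ ^ (-(a/2)-1) * ‖x‖ ^ (-(a/2)-1)) * euler g x
          + c * c * (-(a/2)-1) * (‖x‖ ^ (-(a/2)-1) * ‖x‖ ^ (-(a/2)-1)) * euler g x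
          + 2 * c * c * (‖x‖ ^ (-(a/2)-1) * ‖x‖ ^ (-(a/2)-1)) * euler g x
          + c * c * (‖x‖ ^ (-(a/2)-1) * ‖x‖ ^ (-(a/2)-1)) * Qf g x) * (x j * x j)
      + ((1-a/2) * (‖x‖ ^ (1-a/2) * ‖x‖ ^ (1-a/2-2))
          + 2 * b * (‖x‖ ^ (1-a/2) * ‖x‖ ^ (-(a/2)-1))
          + c * (‖x‖ ^ (1-a/2) * ‖x‖ ^ (-(a/2)-1))
          + c * (1-a/2) * (‖x‖ ^ (1-a/2) * ‖x‖ ^ (-(a/2)-1))) * (x j * pd j g x)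
      + (‖x‖ ^ (1-a/2) * ‖x‖ ^ (1-a/2)) * pd j (pd j g) x
      + (c * (‖x‖ ^ (1-a/2) * ‖x‖ ^ (-(a/2)-1))) * (x j * ∑ l, x l * pd j (pd l g) x)
      + (c * (‖x‖ ^ (1-a/2) * ‖x‖ ^ (-(a/2)-1))) * (x j * ∑ k, x k * pd k (pd j g) x)
      + (b * (‖x‖ ^ (1-a/2) * ‖x‖ ^ (-(a/2)-1)) * g x
          + c * (‖x‖ ^ (1-a/2) * ‖x‖ ^ (-(a/2)-1)) * euler g x) := by
    intro j _
    have h0 : Dop a b c j (Dop a b c j g) x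
        = ‖x‖ ^ (1 - a / 2) * pd j (Dop a b c j g) x
          + b * ‖x‖ ^ (-(a / 2) - 1) * x j * Dop a b c j g x
          + c * ‖x‖ ^ (-(a / 2) - 1) * x j * euler (Dop a b c j g) x := rfl
    have h1 : Dop a b c j g x
        = ‖x‖ ^ (1 - a / 2) * pd j g x + b * ‖x‖ ^ (-(a / 2) - 1) * x j * g x
          + c * ‖x‖ ^ (-(a / 2) - 1) * x j * euler g x := rfl
    rw [h0, h1, pd_Dop a b c hg hx j j, euler_Dop a b c hg hx j]
    simp only [eq_self_iff_true, if_true]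
    ring
  rw [Finset.sum_congr rfl step]
  simp only [Finset.sum_add_distrib, ← Finset.mul_sum]
  rw [nsq_eq, sum_mul_inner g, sum_mul_inner' g]
  have he : (∑ j, x j * pd j g x) = euler g x := rfl
  have hl : (∑ j, pd j (pd j g) x) = lapf g x := rfl
  rw [he, hl]
  simp only [Finset.sum_const, Finset.card_univ, Fintype.card_fin, nsmul_eq_mul]
  -- now a scalar rpow identity
  have hr : (0:ℝ) < ‖x‖ := norm_pos_iff.2 hx
  have hrne : ‖x‖ ≠ 0 := ne_of_gt hr
  have e1 : ‖x‖ ^ (1-a/2) = ‖x‖ * ‖x‖ ^ (-(a/2)) := by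
    rw [show 1-a/2 = 1 + (-(a/2)) by ring, rpow_split hx, Real.rpow_one]
  have e2 : ‖x‖ ^ (1-a/2-2) = ‖x‖ ^ (-(a/2)) * ‖x‖⁻¹ := by
    rw [show 1-a/2-2 = (-(a/2)) + (-1) by ring, rpow_split hx, Real.rpow_neg_one]
  have e3 : ‖x‖ ^ (-(a/2)-1) = ‖x‖ ^ (-(a/2)) * ‖x‖⁻¹ := by
    rw [show -(a/2)-1 = (-(a/2)) + (-1) by ring, rpow_split hx, Real.rpow_neg_one]
  have e4 : ‖x‖ ^ (-(a/2)-1-2) = ‖x‖ ^ (-(a/2)) * ‖x‖⁻¹ * ‖x‖⁻¹ * ‖x‖⁻¹ := by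
    rw [show -(a/2)-1-2 = -(a/2) + (-1) + (-1) + (-1) by ring, rpow_split hx, rpow_split hx,
      rpow_split hx, Real.rpow_neg_one]
  have e5 : ‖x‖ ^ (2-a) = ‖x‖ * ‖x‖ * (‖x‖ ^ (-(a/2)) * ‖x‖ ^ (-(a/2))) := by
    rw [show 2-a = 1 + 1 + (-(a/2)) + (-(a/2)) by ring, rpow_split hx, rpow_split hx,
      rpow_split hx, Real.rpow_one]
    ring
  have e6 : ‖x‖ ^ (-a) = ‖x‖ ^ (-(a/2)) * ‖x‖ ^ (-(a/2)) := by
    rw [show -a = (-(a/2)) + (-(a/2)) by ring, rpow_split hx]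
  have e7 : ‖x‖ ^ (2:ℝ) = ‖x‖ * ‖x‖ := by
    rw [show (2:ℝ) = 1 + 1 by norm_num, rpow_split hx, Real.rpow_one]
  rw [e1, e2, e3, e4, e5, e6, e7]
  field_simp
  ring

lemma pd_pd_rxh (α : ℝ) (l : Fin m) (hh : Sm h) (hx : x ≠ 0) (j k : Fin m) :
    pd j (pd k (fun y => ‖y‖ ^ α * (y l * h y))) x
      = α * ((α-2) * ‖x‖ ^ (α-2-2) * x j * (x k * (x l * h x))
            + ‖x‖ ^ (α-2) * ((if j = k then 1 else 0) * (x l * h x)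
                + x k * ((if j = l then 1 else 0) * h x + x l * pd j h x)))
        + (α * ‖x‖ ^ (α-2) * x j * ((if k = l then 1 else 0) * h x + x l * pd k h x)
            + ‖x‖ ^ α * ((if k = l then 1 else 0) * pd j h x
                + ((if j = l then 1 else 0) * pd k h x + x l * pd j (pd k h) x))) := by
  have hev : pd k (fun y => ‖y‖ ^ α * (y l * h y)) =ᶠ[nhds x]
      (fun y => α * (‖y‖ ^ (α-2) * (y k * (y l * h y)))
        + ‖y‖ ^ α * ((if k = l then 1 else 0) * h y + y l * pd k h y)) := by
    apply eventuallyEq_of_ne hx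
    intro y hy
    rw [pd_rxh α l hh hy k]; ring
  rw [pd_congr hev j]
  have sm1 : Sm (fun y : EuclideanSpace ℝ (Fin m) => ‖y‖ ^ (α-2) * (y k * (y l * h y))) :=
    sm_rxh (α-2) k (sm_xh l hh)
  have smu : Sm (fun y : EuclideanSpace ℝ (Fin m) =>
      (if k = l then (1:ℝ) else 0) * h y + y l * pd k h y) :=
    smAdd (smCMul hh _) (sm_xh l (smPd hh k))
  rw [pd_add (smD (smCMul sm1 α) hx) (smD (sm_rh α smu) hx) j,
    pd_const_mul (smD sm1 hx) α j,
    pd_rxh (α-2) k (sm_xh l hh) hx j,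
    pd_xh l hh hx j,
    pd_rh α smu hx j,
    pd_add (smD (smCMul hh _) hx) (smD (sm_xh l (smPd hh k)) hx) j,
    pd_const_mul (smD hh hx) _ j,
    pd_xh l (smPd hh k) hx j]

lemma pd_pd_rh (α : ℝ) (hh : Sm h) (hx : x ≠ 0) (j k : Fin m) :
    pd j (pd k (fun y => ‖y‖ ^ α * h y)) x
      = α * ((α-2) * ‖x‖ ^ (α-2-2) * x j * (x k * h x)
            + ‖x‖ ^ (α-2) * ((if j = k then 1 else 0) * h x + x k * pd j h x))
        + (α * ‖x‖ ^ (α-2) * x j * pd k h x + ‖x‖ ^ α * pd j (pd k h) x) := by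
  have hev : pd k (fun y => ‖y‖ ^ α * h y) =ᶠ[nhds x]
      (fun y => α * (‖y‖ ^ (α-2) * (y k * h y)) + ‖y‖ ^ α * pd k h y) := by
    apply eventuallyEq_of_ne hx
    intro y hy
    rw [pd_rh α hh hy k]; ring
  rw [pd_congr hev j]
  have sm1 : Sm (fun y : EuclideanSpace ℝ (Fin m) => ‖y‖ ^ (α-2) * (y k * h y)) :=
    sm_rxh (α-2) k hh
  rw [pd_add (smD (smCMul sm1 α) hx) (smD (sm_rh α (smPd hh k)) hx) j,
    pd_const_mul (smD sm1 hx) α j,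
    pd_rxh (α-2) k hh hx j,
    pd_rh α (smPd hh k) hx j]

lemma rpow_collapse4 (hx : x ≠ 0) (α : ℝ) :
    ‖x‖ ^ (α-2-2) * ‖x‖ ^ (2:ℝ) * ‖x‖ ^ (2:ℝ) = ‖x‖ ^ α := by
  rw [rpow_collapse hx (α-2), rpow_collapse hx α]

lemma lap_rxh (α : ℝ) (l : Fin m) (hh : Sm h) (hx : x ≠ 0) :
    lapf (fun y => ‖y‖ ^ α * (y l * h y)) x
      = α*(α-2)*‖x‖^(α-2)*(x l * h x) + 2*α*‖x‖^(α-2)*(h x * x l)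
        + 2*α*‖x‖^(α-2)*(x l * euler h x) + 2*‖x‖^α*pd l h x + ‖x‖^α*(x l * lapf h x)
        + (m:ℝ)*(α*‖x‖^(α-2)*(x l * h x)) := by
  unfold lapf
  have step : ∀ j ∈ Finset.univ, pd j (pd j (fun y => ‖y‖ ^ α * (y l * h y))) x
      = (α*(α-2)*‖x‖^(α-2-2)*(x l * h x)) * (x j * x j)
        + (2*α*‖x‖^(α-2)*h x) * ((if j = l then 1 else 0) * x j)
        + (2*α*‖x‖^(α-2)*x l) * (x j * pd j h x)
        + (2*‖x‖^α) * ((if j = l then 1 else 0) * pd j h x)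
        + (‖x‖^α * x l) * pd j (pd j h) x
        + α*‖x‖^(α-2)*(x l * h x) := by
    intro j _
    rw [pd_pd_rxh α l hh hx j j]
    simp only [eq_self_iff_true, if_true]
    ring
  rw [Finset.sum_congr rfl step]
  simp only [Finset.sum_add_distrib, ← Finset.mul_sum]
  rw [nsq_eq, sum_ite_pick l (fun j => x j), sum_ite_pick l (fun j => pd j h x)]
  have he : (∑ j, x j * pd j h x) = euler h x := rfl
  have hl : (∑ j, pd j (pd j h) x) = lapf h x := rfl
  rw [he, hl]
  simp only [Finset.sum_const, Finset.card_univ, Fintype.card_fin, nsmul_eq_mul]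
  linear_combination (α*(α-2)*(x l * h x)) * rpow_collapse hx (α-2)

lemma lap_rh (α : ℝ) (hh : Sm h) (hx : x ≠ 0) :
    lapf (fun y => ‖y‖ ^ α * h y) x
      = α*(α-2)*‖x‖^(α-2)*h x + α*‖x‖^(α-2)*((m:ℝ)*h x + euler h x)
        + α*‖x‖^(α-2)*euler h x + ‖x‖^α*lapf h x := by
  unfold lapf
  have step : ∀ j ∈ Finset.univ, pd j (pd j (fun y => ‖y‖ ^ α * h y)) x
      = (α*(α-2)*‖x‖^(α-2-2)*h x) * (x j * x j)
        + (2*α*‖x‖^(α-2)) * (x j * pd j h x)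
        + (‖x‖^α) * pd j (pd j h) x
        + α*‖x‖^(α-2)*h x := by
    intro j _
    rw [pd_pd_rh α hh hx j j]
    simp only [eq_self_iff_true, if_true]
    ring
  rw [Finset.sum_congr rfl step]
  simp only [Finset.sum_add_distrib, ← Finset.mul_sum]
  rw [nsq_eq]
  have he : (∑ j, x j * pd j h x) = euler h x := rfl
  have hl : (∑ j, pd j (pd j h) x) = lapf h x := rfl
  rw [he, hl]
  simp only [Finset.sum_const, Finset.card_univ, Fintype.card_fin, nsmul_eq_mul]
  linear_combination (α*(α-2)*h x) * rpow_collapse hx (α-2)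

lemma Q_rxh (α : ℝ) (l : Fin m) (hh : Sm h) (hx : x ≠ 0) :
    Qf (fun y => ‖y‖ ^ α * (y l * h y)) x
      = α*(α-2)*‖x‖^α*(x l * h x) + 3*α*‖x‖^α*(x l * h x) + 2*α*‖x‖^α*(x l * euler h x)
        + 2*‖x‖^α*(x l * euler h x) + ‖x‖^α*(x l * Qf h x) := by
  have inner : ∀ j ∈ Finset.univ,
      (∑ k, x j * x k * pd j (pd k (fun y => ‖y‖ ^ α * (y l * h y))) x)
      = (α*(α-2)*‖x‖^(α-2-2)*(x l * h x)*(x j * x j)) * ‖x‖^(2:ℝ)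
        + (α*‖x‖^(α-2)*(x l * h x)) * (x j * x j)
        + (α*‖x‖^(α-2)*‖x‖^(2:ℝ)*h x) * ((if j = l then 1 else 0) * x j)
        + (α*‖x‖^(α-2)*‖x‖^(2:ℝ)) * (x j * pd j h x) * x l
        + (α*‖x‖^(α-2)*h x*x l) * (x j * x j)
        + (α*‖x‖^(α-2)*x l*euler h x) * (x j * x j)
        + (‖x‖^α*x l) * (x j * pd j h x)
        + (‖x‖^α*euler h x) * ((if j = l then 1 else 0) * x j)
        + (‖x‖^α*x l) * (x j * ∑ k, x k * pd j (pd k h) x) := by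
    intro j _
    have step : ∀ k ∈ Finset.univ, x j * x k * pd j (pd k (fun y => ‖y‖ ^ α * (y l * h y))) x
        = (α*(α-2)*‖x‖^(α-2-2)*(x l * h x)*(x j * x j)) * (x k * x k)
          + (α*‖x‖^(α-2)*(x l * h x)*x j) * ((if j = k then 1 else 0) * x k)
          + (α*‖x‖^(α-2)*((if j = l then 1 else 0)*h x + x l*pd j h x)*x j) * (x k * x k)
          + (α*‖x‖^(α-2)*h x*(x j * x j)) * ((if k = l then 1 else 0) * x k)
          + (α*‖x‖^(α-2)*x l*(x j * x j)) * (x k * pd k h x)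
          + (‖x‖^α*pd j h x*x j) * ((if k = l then 1 else 0) * x k)
          + (‖x‖^α*(if j = l then 1 else 0)*x j) * (x k * pd k h x)
          + (‖x‖^α*x l*x j) * (x k * pd j (pd k h) x) := by
      intro k _
      rw [pd_pd_rxh α l hh hx j k]
      ring
    rw [Finset.sum_congr rfl step]
    simp only [Finset.sum_add_distrib, ← Finset.mul_sum]
    rw [nsq_eq, sum_ite_pick' j (fun k => x k), sum_ite_pick l (fun k => x k)]
    have he : (∑ k, x k * pd k h x) = euler h x := rfl
    rw [he]
    ring
  unfold Qf
  rw [Finset.sum_congr rfl inner]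
  simp only [Finset.sum_add_distrib, ← Finset.mul_sum, ← Finset.sum_mul]
  rw [nsq_eq, sum_ite_pick l (fun j => x j)]
  have he : (∑ j, x j * pd j h x) = euler h x := rfl
  rw [he, sum_mul_inner h]
  have hq : (∑ j, ∑ k, x j * x k * pd j (pd k h) x) = Qf h x := rfl
  rw [hq]
  linear_combination (α*(α-2)*(x l * h x)) * rpow_collapse4 hx α
    + (α*(3*(x l * h x) + 2*(x l * euler h x))) * rpow_collapse hx α

lemma Q_rh (α : ℝ) (hh : Sm h) (hx : x ≠ 0) :
    Qf (fun y => ‖y‖ ^ α * h y) x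
      = α*(α-2)*‖x‖^α*h x + α*‖x‖^α*h x + 2*α*‖x‖^α*euler h x + ‖x‖^α*Qf h x := by
  have inner : ∀ j ∈ Finset.univ,
      (∑ k, x j * x k * pd j (pd k (fun y => ‖y‖ ^ α * h y)) x)
      = (α*(α-2)*‖x‖^(α-2-2)*h x*(x j * x j)) * ‖x‖^(2:ℝ)
        + (α*‖x‖^(α-2)*h x) * (x j * x j)
        + (α*‖x‖^(α-2)*‖x‖^(2:ℝ)) * (x j * pd j h x)
        + (α*‖x‖^(α-2)*euler h x) * (x j * x j)
        + ‖x‖^α * (x j * ∑ k, x k * pd j (pd k h) x) := by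
    intro j _
    have step : ∀ k ∈ Finset.univ, x j * x k * pd j (pd k (fun y => ‖y‖ ^ α * h y)) x
        = (α*(α-2)*‖x‖^(α-2-2)*h x*(x j * x j)) * (x k * x k)
          + (α*‖x‖^(α-2)*h x*x j) * ((if j = k then 1 else 0) * x k)
          + (α*‖x‖^(α-2)*pd j h x*x j) * (x k * x k)
          + (α*‖x‖^(α-2)*(x j * x j)) * (x k * pd k h x)
          + (‖x‖^α*x j) * (x k * pd j (pd k h) x) := by
      intro k _
      rw [pd_pd_rh α hh hx j k]
      ring
    rw [Finset.sum_congr rfl step]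
    simp only [Finset.sum_add_distrib, ← Finset.mul_sum]
    rw [nsq_eq, sum_ite_pick' j (fun k => x k)]
    have he : (∑ k, x k * pd k h x) = euler h x := rfl
    rw [he]
    ring
  unfold Qf
  rw [Finset.sum_congr rfl inner]
  simp only [Finset.sum_add_distrib, ← Finset.mul_sum, ← Finset.sum_mul]
  rw [nsq_eq]
  have he : (∑ j, x j * pd j h x) = euler h x := rfl
  rw [he]
  have hq : (∑ j, ∑ k, x j * x k * pd j (pd k h) x) = Qf h x := rfl
  linear_combination (α*(α-2)*h x) * rpow_collapse4 hx α
    + (α*(h x + 2*euler h x)) * rpow_collapse hx α + (‖x‖^α) * sum_mul_inner (x := x) h - (‖x‖^α) * hq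

end Aux

set_option maxHeartbeats 4000000 in
theorem stmt_7 (m : ℕ) (hm : 1 ≤ m) (a b c : ℝ) (hc : c ≠ -1)
    (ha : 0 < a) (hca : c = 2 / a - 1)
    (f : EuclideanSpace ℝ (Fin m) → ℝ)
    (hf : ContDiffOn ℝ (⊤ : ℕ∞) f {(0 : EuclideanSpace ℝ (Fin m))}ᶜ)
    (i : Fin m) (x : EuclideanSpace ℝ (Fin m)) (hx : x ≠ 0) :
    (∑ j, Dop a b c j (Dop a b c j (Xop a i f)) x)
        - Xop a i (fun y => ∑ j, Dop a b c j (Dop a b c j f) y) x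
      = a * (1 + c) * Dop a b c i f x ∧
    (∑ j, Dop a b c j (Dop a b c j fun y => ‖y‖ ^ a * f y) x)
        - ‖x‖ ^ a * ∑ j, Dop a b c j (Dop a b c j f) x
      = 2 * a * (1 + c) ^ 2
          * (euler f x + ((a / 2 + (2 * b + m - 1) / (1 + c)) / 2) * f x) := by
  subst hca
  have hf' : Aux.Sm f := hf.of_le (by simp)
  have hr : (0:ℝ) < ‖x‖ := norm_pos_iff.2 hx
  have hrne : ‖x‖ ≠ 0 := ne_of_gt hr
  have hane : a ≠ 0 := ne_of_gt ha
  set t := ‖x‖ ^ (-(a/2)) with ht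
  have htpos : 0 < t := Real.rpow_pos_of_pos hr _
  have htne : t ≠ 0 := ne_of_gt htpos
  have ehalf : ‖x‖ ^ (a/2) = t⁻¹ := by
    rw [ht, Real.rpow_neg (le_of_lt hr), inv_inv]
  have E1 : ‖x‖ ^ (1-a/2) = ‖x‖ * t := by
    rw [show 1-a/2 = 1 + (-(a/2)) by ring, Aux.rpow_split hx, Real.rpow_one]
  have E2 : ‖x‖ ^ (-(a/2)-1) = t * ‖x‖⁻¹ := by
    rw [show -(a/2)-1 = (-(a/2)) + (-1) by ring, Aux.rpow_split hx, Real.rpow_neg_one]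
  have E3 : ‖x‖ ^ (2-a) = ‖x‖ * ‖x‖ * (t * t) := by
    rw [show 2-a = 1 + 1 + (-(a/2)) + (-(a/2)) by ring, Aux.rpow_split hx, Aux.rpow_split hx,
      Aux.rpow_split hx, Real.rpow_one]
    ring
  have E4 : ‖x‖ ^ (-a) = t * t := by
    rw [show -a = (-(a/2)) + (-(a/2)) by ring, Aux.rpow_split hx]
  have E5 : ‖x‖ ^ (a/2-1) = t⁻¹ * ‖x‖⁻¹ := by
    rw [show a/2-1 = (a/2) + (-1) by ring, Aux.rpow_split hx, ehalf, Real.rpow_neg_one]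
  have E6 : ‖x‖ ^ (a/2-1-2) = t⁻¹ * ‖x‖⁻¹ * ‖x‖⁻¹ * ‖x‖⁻¹ := by
    rw [show a/2-1-2 = (a/2) + (-1) + (-1) + (-1) by ring, Aux.rpow_split hx, Aux.rpow_split hx,
      Aux.rpow_split hx, ehalf, Real.rpow_neg_one]
  have E7 : ‖x‖ ^ (a:ℝ) = t⁻¹ * t⁻¹ := by
    rw [show (a:ℝ) = (a/2) + (a/2) by ring, Aux.rpow_split hx, ehalf]
  have E8 : ‖x‖ ^ (a-2) = t⁻¹ * t⁻¹ * ‖x‖⁻¹ * ‖x‖⁻¹ := by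
    rw [show a-2 = (a/2) + (a/2) + (-1) + (-1) by ring, Aux.rpow_split hx, Aux.rpow_split hx,
      Aux.rpow_split hx, ehalf, Real.rpow_neg_one]
  have E9 : ‖x‖ ^ (a-2-2) = t⁻¹ * t⁻¹ * ‖x‖⁻¹ * ‖x‖⁻¹ * ‖x‖⁻¹ * ‖x‖⁻¹ := by
    rw [show a-2-2 = (a/2) + (a/2) + (-1) + (-1) + (-1) + (-1) by ring, Aux.rpow_split hx,
      Aux.rpow_split hx, Aux.rpow_split hx, Aux.rpow_split hx, Aux.rpow_split hx, ehalf,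
      Real.rpow_neg_one]
  constructor
  · -- commutator with X_i
    have hXf : Xop a i f = fun y => ‖y‖ ^ (a/2-1) * (y i * f y) := by
      funext y; unfold Xop; ring
    rw [hXf]
    rw [Aux.master a b (2/a-1) (Aux.sm_rxh (a/2-1) i hf') hx]
    rw [Aux.lap_rxh (a/2-1) i hf' hx, Aux.euler_rxh (a/2-1) i hf' hx,
      Aux.Q_rxh (a/2-1) i hf' hx]
    have hXL : Xop a i (fun y => ∑ j, Dop a b (2/a-1) j (Dop a b (2/a-1) j f) y) x
        = ‖x‖ ^ (a/2-1) * x i * (∑ j, Dop a b (2/a-1) j (Dop a b (2/a-1) j f) x) := rfl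
    rw [hXL, Aux.master a b (2/a-1) hf' hx]
    have hD : Dop a b (2/a-1) i f x
        = ‖x‖ ^ (1-a/2) * pd i f x + b * ‖x‖ ^ (-(a/2)-1) * x i * f x
          + (2/a-1) * ‖x‖ ^ (-(a/2)-1) * x i * euler f x := rfl
    rw [hD]
    rw [E1, E2, E3, E4, E5, E6]
    field_simp
    ring
  · -- commutator with |x|^a
    rw [Aux.master a b (2/a-1) (Aux.sm_rh a hf') hx]
    rw [Aux.lap_rh a hf' hx, Aux.euler_rh a hf' hx, Aux.Q_rh a hf' hx]
    rw [Aux.master a b (2/a-1) hf' hx]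
    rw [E3, E4, E7, E8]
    field_simp
    ring
end

section
/- With the notation of the context, for every x ≠ 0 and every j ∈ {1,…,m}: D_j( ‖·‖^{β₀} )(x) = 0, and for every integer t ≥ 1, D_j( p_t(‖·‖) ‖·‖^{β₀} )(x) = − 2(1+c)² a t · q_{t−1}(‖x‖) ‖x‖^{β₀ + a/2 − 1} x_j. (Componentwise scalar form, for k = 0 and spherical monogenic of degree ℓ = 0, of the lowering relation D ψ_{2t,0} = 2(1+c)² a t ψ_{2t−1,0} for the generalized Clifford–Laguerre polynomials, together with their explicit coefficient formulas.) -/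
open Real

/-- `β₀ = -b/(1+c)`. -/
noncomputable def beta0 (b c : ℝ) : ℝ := -b / (1 + c)

/-- `γ₀ = a/2 + (m-1)/(1+c)`. -/
noncomputable def gamma0 (m : ℕ) (a c : ℝ) : ℝ := a / 2 + ((m : ℝ) - 1) / (1 + c)

/-- The radial polynomial
`p_t(r) = Σ_{i=0}^t 2^{2t}(1+c)^{2t} C(t,i) (Γ(γ/a+t)/Γ(γ/a+i)) (a/2)^{t-i} (-1)^i r^{a i}`. -/
noncomputable def lagP (a c γ : ℝ) (t : ℕ) (r : ℝ) : ℝ :=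
  ∑ i ∈ Finset.range (t + 1),
    2 ^ (2 * t) * (1 + c) ^ (2 * t) * (t.choose i : ℝ)
      * (Real.Gamma (γ / a + t) / Real.Gamma (γ / a + i))
      * (a / 2) ^ (t - i) * (-1 : ℝ) ^ i * r ^ (a * i)

/-- The radial polynomial
`q_t(r) = Σ_{i=0}^t 2^{2t+1}(1+c)^{2t+1} C(t,i) (Γ(γ/a+t+1)/Γ(γ/a+i+1)) (a/2)^{t-i} (-1)^i r^{a i}`. -/
noncomputable def lagQ (a c γ : ℝ) (t : ℕ) (r : ℝ) : ℝ :=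
  ∑ i ∈ Finset.range (t + 1),
    2 ^ (2 * t + 1) * (1 + c) ^ (2 * t + 1) * (t.choose i : ℝ)
      * (Real.Gamma (γ / a + t + 1) / Real.Gamma (γ / a + i + 1))
      * (a / 2) ^ (t - i) * (-1 : ℝ) ^ i * r ^ (a * i)

lemma my_hasFDerivAt_norm_rpow {m : ℕ} (x : EuclideanSpace ℝ (Fin m)) (hx : x ≠ 0) (s : ℝ) :
    HasFDerivAt (fun y : EuclideanSpace ℝ (Fin m) => ‖y‖ ^ s)
      ((s * ‖x‖ ^ (s - 2)) • innerSL ℝ x) x := by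
  have hn : ‖x‖ ≠ 0 := norm_ne_zero_iff.2 hx
  have h0 : (‖x‖ ^ 2 : ℝ) ≠ 0 := pow_ne_zero 2 hn
  have h := ((hasStrictFDerivAt_norm_sq x).hasFDerivAt).rpow_const (p := s / 2) (Or.inl h0)
  have hfun : (fun y : EuclideanSpace ℝ (Fin m) => (‖y‖ ^ 2 : ℝ) ^ (s / 2))
      = fun y => ‖y‖ ^ s := by
    funext y
    rw [← Real.rpow_natCast ‖y‖ 2, ← Real.rpow_mul (norm_nonneg y)]
    norm_num
    rw [mul_div_cancel₀ _ (two_ne_zero)]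
  rw [hfun] at h
  refine h.congr_fderiv ?_
  refine ContinuousLinearMap.ext fun v => ?_
  have h2 : ((‖x‖ ^ 2 : ℝ)) ^ (s / 2 - 1) = ‖x‖ ^ (s - 2) := by
    rw [← Real.rpow_natCast ‖x‖ 2, ← Real.rpow_mul (norm_nonneg x)]
    norm_num
    ring_nf
  simp [h2]
  ring

lemma Dop_congr {m : ℕ} (a b c : ℝ) (j : Fin m) (f g : EuclideanSpace ℝ (Fin m) → ℝ)
    (x : EuclideanSpace ℝ (Fin m)) (h : f =ᶠ[nhds x] g) :
    Dop a b c j f x = Dop a b c j g x := by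
  have hfd : ∀ i : Fin m, pd i f x = pd i g x := fun i => by
    unfold pd; rw [h.fderiv_eq]
  unfold Dop euler
  rw [h.self_of_nhds]
  simp only [hfd]

lemma Dop_sum_rpow {m : ℕ} {ι : Type} (a b c : ℝ) (j : Fin m)
    (x : EuclideanSpace ℝ (Fin m)) (hx : x ≠ 0) (S : Finset ι) (A e : ι → ℝ) :
    Dop a b c j (fun y => ∑ i ∈ S, A i * ‖y‖ ^ e i) x
      = ∑ i ∈ S, A i * ((1 + c) * e i + b) * ‖x‖ ^ (e i - a / 2 - 1) * x j := by
  have hxn : (0:ℝ) < ‖x‖ := norm_pos_iff.2 hx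
  have hsum : HasFDerivAt (fun y : EuclideanSpace ℝ (Fin m) => ∑ i ∈ S, A i * ‖y‖ ^ e i)
      ((∑ i ∈ S, A i * (e i * ‖x‖ ^ (e i - 2))) • innerSL ℝ x) x := by
    have h : ∀ i ∈ S, HasFDerivAt (fun y : EuclideanSpace ℝ (Fin m) => A i * ‖y‖ ^ e i)
        ((A i * (e i * ‖x‖ ^ (e i - 2))) • innerSL ℝ x) x := by
      intro i _
      have := (my_hasFDerivAt_norm_rpow x hx (e i)).const_mul (A i)
      refine this.congr_fderiv ?_
      rw [smul_smul]
    have := HasFDerivAt.fun_sum h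
    rwa [← Finset.sum_smul] at this
  have hpd : ∀ k : Fin m, pd k (fun y => ∑ i ∈ S, A i * ‖y‖ ^ e i) x
      = (∑ i ∈ S, A i * (e i * ‖x‖ ^ (e i - 2))) * x k := by
    intro k
    unfold pd
    rw [hsum.fderiv]
    simp only [ContinuousLinearMap.coe_smul', Pi.smul_apply, innerSL_apply_apply, smul_eq_mul]
    congr 1
    simpa using EuclideanSpace.inner_single_right (𝕜 := ℝ) k 1 x
  have heuler : euler (fun y => ∑ i ∈ S, A i * ‖y‖ ^ e i) x
      = (∑ i ∈ S, A i * (e i * ‖x‖ ^ (e i - 2))) * ‖x‖ ^ (2:ℝ) := by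
    unfold euler
    simp only [hpd]
    have hns : (∑ k, x k * x k) = ‖x‖ ^ (2:ℝ) := by
      rw [show ((2:ℝ)) = ((2:ℕ):ℝ) by norm_num, Real.rpow_natCast,
        ← real_inner_self_eq_norm_sq]
      simp only [PiLp.inner_apply, RCLike.inner_apply, conj_trivial]
    rw [← hns, Finset.mul_sum]
    exact Finset.sum_congr rfl fun k _ => by ring
  unfold Dop
  rw [hpd, heuler]
  simp only [Finset.sum_mul, Finset.mul_sum]
  rw [← Finset.sum_add_distrib, ← Finset.sum_add_distrib]
  refine Finset.sum_congr rfl fun i _ => ?_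
  have hA : ‖x‖ ^ (1 - a/2) * ‖x‖ ^ (e i - 2) = ‖x‖ ^ (e i - a/2 - 1) := by
    rw [← Real.rpow_add hxn]; ring_nf
  have hB : ‖x‖ ^ (-(a/2) - 1) * ‖x‖ ^ (e i) = ‖x‖ ^ (e i - a/2 - 1) := by
    rw [← Real.rpow_add hxn]; ring_nf
  have hC : ‖x‖ ^ (-(a/2) - 1) * ‖x‖ ^ (e i - 2) * ‖x‖ ^ (2:ℝ) = ‖x‖ ^ (e i - a/2 - 1) := by
    rw [← Real.rpow_add hxn, ← Real.rpow_add hxn]; ring_nf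
  linear_combination (A i * e i * x j) * hA + (b * A i * x j) * hB
    + (c * A i * e i * x j) * hC

theorem stmt_10 (m : ℕ) (hm : 1 ≤ m) (a b c : ℝ) (ha : 0 < a) (hc : 0 < 1 + c)
    (j : Fin m) (x : EuclideanSpace ℝ (Fin m)) (hx : x ≠ 0) :
    Dop a b c j (fun y => ‖y‖ ^ beta0 b c) x = 0 ∧
    ∀ t : ℕ, 1 ≤ t →
      Dop a b c j (fun y => lagP a c (gamma0 m a c) t ‖y‖ * ‖y‖ ^ beta0 b c) x
        = -(2 * (1 + c) ^ 2 * a * t)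
            * (lagQ a c (gamma0 m a c) (t - 1) ‖x‖ * ‖x‖ ^ (beta0 b c + a / 2 - 1) * x j) := by
  have hxn : (0:ℝ) < ‖x‖ := norm_pos_iff.2 hx
  have hb0 : (1 + c) * beta0 b c + b = 0 := by
    unfold beta0; field_simp; ring
  constructor
  · have h := Dop_sum_rpow (ι := ℕ) a b c j x hx {0} (fun _ => 1) (fun _ => beta0 b c)
    simp only [Finset.sum_singleton, one_mul] at h
    rw [h, hb0]
    ring
  · intro t ht
    obtain ⟨s, rfl⟩ : ∃ s, t = s + 1 := ⟨t - 1, (Nat.succ_pred_eq_of_pos ht).symm⟩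
    set γ := gamma0 m a c with hγ
    set A : ℕ → ℝ := fun i => 2 ^ (2 * (s+1)) * (1 + c) ^ (2 * (s+1)) * ((s+1).choose i : ℝ)
      * (Real.Gamma (γ / a + (s+1 : ℕ)) / Real.Gamma (γ / a + i))
      * (a / 2) ^ ((s+1) - i) * (-1 : ℝ) ^ i with hA
    have heq : (fun y : EuclideanSpace ℝ (Fin m) => lagP a c γ (s+1) ‖y‖ * ‖y‖ ^ beta0 b c)
        =ᶠ[nhds x] (fun y => ∑ i ∈ Finset.range (s+1+1), A i * ‖y‖ ^ (a * i + beta0 b c)) := by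
      filter_upwards [isOpen_compl_singleton.mem_nhds (by simpa using hx)] with y hy
      have hyn : (0:ℝ) < ‖y‖ := norm_pos_iff.2 (by simpa using hy)
      unfold lagP
      rw [Finset.sum_mul]
      exact Finset.sum_congr rfl fun i _ => by
        rw [hA, mul_assoc, ← Real.rpow_add hyn]
    rw [Dop_congr a b c j _ _ x heq,
      Dop_sum_rpow a b c j x hx _ A (fun i => a * i + beta0 b c)]
    have hco : ∀ u : ℝ, (1 + c) * (a * u + beta0 b c) + b = (1 + c) * (a * u) := fun u => by
      linear_combination hb0
    rw [Finset.sum_range_succ']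
    have h0 : A 0 * ((1 + c) * (a * (0:ℕ) + beta0 b c) + b)
        * ‖x‖ ^ (a * (0:ℕ) + beta0 b c - a / 2 - 1) * x j = 0 := by
      rw [hco]
      norm_num
    rw [h0, add_zero]
    rw [lagQ, Finset.sum_mul, Finset.sum_mul, Finset.mul_sum]
    refine Finset.sum_congr rfl fun i hi => ?_
    rw [hco, hA]
    have hpow : ‖x‖ ^ (a * ((i:ℝ)+1) + beta0 b c - a / 2 - 1)
        = ‖x‖ ^ (a * (i:ℝ)) * ‖x‖ ^ (beta0 b c + a / 2 - 1) := by
      rw [← Real.rpow_add hxn]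
      congr 1
      ring
    have hch : (((s+1).choose (i+1) : ℝ)) * ((i:ℝ) + 1) = ((s:ℝ) + 1) * (s.choose i : ℝ) := by
      exact_mod_cast (Nat.add_one_mul_choose_eq s i).symm
    push_cast
    rw [hpow]
    simp only [show 2*(s+1) = 2*s+1+1 from by ring, pow_succ, Nat.succ_sub_succ_eq_sub,
      ← add_assoc]
    linear_combination (-(2:ℝ)) * (1+c)^(2*s+1) * (1+c)^2 * 2^(2*s+1)
      * (Real.Gamma (γ/a + (s:ℝ) + 1) / Real.Gamma (γ/a + (i:ℝ) + 1)) * (a/2)^(s-i)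
      * (-1:ℝ)^i * a * ‖x‖^(a*(i:ℝ)) * ‖x‖^(beta0 b c + a/2 - 1) * x j * hch
end

section
/- With the notation of the context, for every integer t ≥ 0 and every x ≠ 0: Σ_{i=1}^m D_i( q_t(‖·‖) ‖·‖^{β₀ + a/2 − 1} x_i )(x) = 2(1+c)² ( γ₀ + a t ) p_t(‖x‖) ‖x‖^{β₀}. (Componentwise scalar form, for k = 0 and spherical monogenic of degree ℓ = 0, of the relation D ψ_{2t+1,0} = 2(1+c)² (γ₀ + a t) ψ_{2t,0} for the generalized Clifford–Laguerre polynomials.) -/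
open Real

section Aux

variable {m : ℕ}

lemma aux_norm_rpow (s : ℝ) {x : EuclideanSpace ℝ (Fin m)} (hx : x ≠ 0) :
    HasFDerivAt (fun y : EuclideanSpace ℝ (Fin m) => ‖y‖ ^ s)
      ((s * ‖x‖ ^ (s - 2)) • innerSL ℝ x) x := by
  have hR : (0:ℝ) < ‖x‖ := norm_pos_iff.mpr hx
  have h2 : HasFDerivAt (fun y : EuclideanSpace ℝ (Fin m) => ‖y‖ ^ 2)
      (2 • (innerSL ℝ x)) x := by simpa using (hasFDerivAt_id x).norm_sq
  have hg : HasDerivAt (fun r : ℝ => r ^ (s/2)) ((s/2) * (‖x‖ ^ 2) ^ (s/2 - 1)) (‖x‖ ^ 2) :=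
    Real.hasDerivAt_rpow_const (Or.inl (by positivity))
  have h := hg.comp_hasFDerivAt x h2
  have hfun : (fun y : EuclideanSpace ℝ (Fin m) => ‖y‖ ^ s)
      = fun y => (‖y‖ ^ 2 : ℝ) ^ (s/2) := by
    funext y
    rw [← Real.rpow_natCast ‖y‖ 2, ← Real.rpow_mul (norm_nonneg y)]
    push_cast
    rw [show (2:ℝ) * (s/2) = s by ring]
  have hL : ((s * ‖x‖ ^ (s - 2)) • innerSL ℝ x)
      = (s / 2 * (‖x‖ ^ 2) ^ (s / 2 - 1)) • (2 • (innerSL ℝ x)) := by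
    ext v
    simp only [ContinuousLinearMap.smul_apply, smul_eq_mul, ContinuousLinearMap.coe_smul',
      Pi.smul_apply, nsmul_eq_mul, Nat.cast_ofNat]
    rw [← Real.rpow_natCast ‖x‖ 2, ← Real.rpow_mul (norm_nonneg x)]
    push_cast
    rw [show (2:ℝ) * (s/2 - 1) = s - 2 by ring]
    ring
  rw [hfun, hL]
  exact h

lemma aux_rpow_mul (s : ℝ) (i : Fin m) {x : EuclideanSpace ℝ (Fin m)} (hx : x ≠ 0) :
    HasFDerivAt (fun y : EuclideanSpace ℝ (Fin m) => ‖y‖ ^ s * y i)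
      (‖x‖ ^ s • (EuclideanSpace.proj i : EuclideanSpace ℝ (Fin m) →L[ℝ] ℝ)
        + x i • ((s * ‖x‖ ^ (s - 2)) • innerSL ℝ x)) x :=
  (aux_norm_rpow s hx).mul (EuclideanSpace.proj (𝕜 := ℝ) i).hasFDerivAt

lemma pd_sum_rpow_mul (n : ℕ) (C e : ℕ → ℝ) (i j : Fin m)
    {x : EuclideanSpace ℝ (Fin m)} (hx : x ≠ 0)
    (f : EuclideanSpace ℝ (Fin m) → ℝ)
    (hf : ∀ y : EuclideanSpace ℝ (Fin m), y ≠ 0 →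
      f y = ∑ k ∈ Finset.range n, C k * (‖y‖ ^ (e k) * y i)) :
    pd j f x = ∑ k ∈ Finset.range n,
      C k * (‖x‖ ^ (e k) * (if i = j then (1:ℝ) else 0)
        + x i * (e k * ‖x‖ ^ (e k - 2) * x j)) := by
  have hG : HasFDerivAt (fun y : EuclideanSpace ℝ (Fin m) =>
      ∑ k ∈ Finset.range n, C k * (‖y‖ ^ (e k) * y i))
      (∑ k ∈ Finset.range n, C k • (‖x‖ ^ (e k) • (EuclideanSpace.proj i :
          EuclideanSpace ℝ (Fin m) →L[ℝ] ℝ)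
        + x i • ((e k * ‖x‖ ^ (e k - 2)) • innerSL ℝ x))) x :=
    HasFDerivAt.fun_sum fun k _ => (aux_rpow_mul (e k) i hx).const_mul (C k)
  have hne : ∀ᶠ y in nhds x, y ≠ 0 := eventually_ne_nhds hx
  have hF : HasFDerivAt f _ x :=
    hG.congr_of_eventuallyEq (hne.mono fun y hy => hf y hy)
  rw [pd, hF.fderiv]
  rw [ContinuousLinearMap.sum_apply]
  refine Finset.sum_congr rfl fun k _ => ?_
  simp only [ContinuousLinearMap.smul_apply, ContinuousLinearMap.add_apply,
    PiLp.proj_apply, innerSL_apply_apply, smul_eq_mul,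
    EuclideanSpace.inner_single_right, EuclideanSpace.single_apply, conj_trivial,
    RCLike.inner_apply, map_one, one_mul, mul_one]

end Aux

/-- Coefficient of `q_t`. -/
noncomputable def myCq (a c γ : ℝ) (t k : ℕ) : ℝ :=
  2 ^ (2 * t + 1) * (1 + c) ^ (2 * t + 1) * (t.choose k : ℝ)
    * (Real.Gamma (γ / a + t + 1) / Real.Gamma (γ / a + k + 1))
    * (a / 2) ^ (t - k) * (-1 : ℝ) ^ k

/-- Coefficient of `p_t`. -/
noncomputable def myCp (a c γ : ℝ) (t k : ℕ) : ℝ :=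
  2 ^ (2 * t) * (1 + c) ^ (2 * t) * (t.choose k : ℝ)
    * (Real.Gamma (γ / a + t) / Real.Gamma (γ / a + k))
    * (a / 2) ^ (t - k) * (-1 : ℝ) ^ k

/-- Exponents appearing in the computation. -/
noncomputable def myE (a β : ℝ) (k : ℕ) : ℝ := a * k + (β + a / 2 - 1)

lemma coeff_key (m : ℕ) (hm : 1 ≤ m) (a b c : ℝ) (ha : 0 < a) (hc : 0 < 1 + c)
    (t k : ℕ) :
    myCq a c (gamma0 m a c) t k
        * ((m : ℝ) + myE a (beta0 b c) k + b + c * (1 + myE a (beta0 b c) k))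
      = 2 * (1 + c) ^ 2 * (gamma0 m a c + a * t) * myCp a c (gamma0 m a c) t k := by
  have hγ : 0 < gamma0 m a c := by
    have h1 : (0:ℝ) ≤ ((m:ℝ) - 1) / (1 + c) := by
      apply div_nonneg _ hc.le
      simp only [sub_nonneg]
      exact_mod_cast hm
    unfold gamma0 at *
    linarith
  have hg : 0 < gamma0 m a c / a := div_pos hγ ha
  have hgk : (0:ℝ) < gamma0 m a c / a + k := by positivity
  have hgt : (0:ℝ) < gamma0 m a c / a + t := by positivity
  have hΓk : Real.Gamma (gamma0 m a c / a + k) ≠ 0 := (Real.Gamma_pos_of_pos hgk).ne'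
  have hK : (m : ℝ) + myE a (beta0 b c) k + b + c * (1 + myE a (beta0 b c) k)
      = (1 + c) * (gamma0 m a c + a * k) := by
    unfold myE beta0 gamma0
    field_simp
    ring
  have hak : gamma0 m a c + a * k = a * (gamma0 m a c / a + k) := by
    rw [mul_add, mul_div_cancel₀ _ ha.ne']
  have hat : gamma0 m a c + a * t = a * (gamma0 m a c / a + t) := by
    rw [mul_add, mul_div_cancel₀ _ ha.ne']
  rw [hK, hak, hat]
  unfold myCq myCp
  rw [Real.Gamma_add_one hgk.ne', Real.Gamma_add_one hgt.ne', pow_succ, pow_succ]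
  set g := gamma0 m a c / a
  set Gt := Real.Gamma (g + t)
  set Gk := Real.Gamma (g + k)
  field_simp

theorem stmt_11 (m : ℕ) (hm : 1 ≤ m) (a b c : ℝ) (ha : 0 < a) (hc : 0 < 1 + c)
    (t : ℕ) (x : EuclideanSpace ℝ (Fin m)) (hx : x ≠ 0) :
    ∑ i, Dop a b c i
        (fun y => lagQ a c (gamma0 m a c) t ‖y‖ * ‖y‖ ^ (beta0 b c + a / 2 - 1) * y i) x
      = 2 * (1 + c) ^ 2 * (gamma0 m a c + a * t)
          * (lagP a c (gamma0 m a c) t ‖x‖ * ‖x‖ ^ beta0 b c) := by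
  have hR : (0:ℝ) < ‖x‖ := norm_pos_iff.mpr hx
  have hmerge : ∀ p q : ℝ, ‖x‖ ^ p * ‖x‖ ^ q = ‖x‖ ^ (p + q) :=
    fun p q => (Real.rpow_add hR p q).symm
  have hmul2 : ∀ p : ℝ, ‖x‖ ^ p * ‖x‖ ^ (2:ℕ) = ‖x‖ ^ (p + 2) := fun p => by
    rw [← Real.rpow_natCast ‖x‖ 2, hmerge]
    norm_num
  have hsq : ∑ i, x i * x i = ‖x‖ ^ (2:ℕ) := by
    rw [← real_inner_self_eq_norm_sq, PiLp.inner_apply]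
    simp
    exact Finset.sum_congr rfl fun _ _ => (sq _).symm
  have hf : ∀ i : Fin m, ∀ y : EuclideanSpace ℝ (Fin m), y ≠ 0 →
      (fun y : EuclideanSpace ℝ (Fin m) =>
          lagQ a c (gamma0 m a c) t ‖y‖ * ‖y‖ ^ (beta0 b c + a / 2 - 1) * y i) y
        = ∑ k ∈ Finset.range (t+1), myCq a c (gamma0 m a c) t k
            * (‖y‖ ^ (myE a (beta0 b c) k) * y i) := by
    intro i y hy
    have hRy : (0:ℝ) < ‖y‖ := norm_pos_iff.mpr hy
    simp only [lagQ, myCq, myE]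
    rw [Finset.sum_mul, Finset.sum_mul]
    refine Finset.sum_congr rfl fun k _ => ?_
    rw [Real.rpow_add hRy]
    ring
  have hpd : ∀ i j : Fin m, pd j
      (fun y : EuclideanSpace ℝ (Fin m) =>
          lagQ a c (gamma0 m a c) t ‖y‖ * ‖y‖ ^ (beta0 b c + a / 2 - 1) * y i) x
      = ∑ k ∈ Finset.range (t+1), myCq a c (gamma0 m a c) t k
          * (‖x‖ ^ (myE a (beta0 b c) k) * (if i = j then (1:ℝ) else 0)
            + x i * (myE a (beta0 b c) k * ‖x‖ ^ (myE a (beta0 b c) k - 2) * x j)) :=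
    fun i j => pd_sum_rpow_mul (t+1) _ _ i j hx _ (hf i)
  have e1 : ∀ k : ℕ, ‖x‖ ^ (myE a (beta0 b c) k - 2) * ‖x‖ ^ (2:ℕ)
      = ‖x‖ ^ (myE a (beta0 b c) k) := fun k => by
    rw [hmul2]
    norm_num
  have e2 : ‖x‖ ^ (-(a/2) - 1) * ‖x‖ ^ (2:ℕ) = ‖x‖ ^ (1 - a/2) := by
    rw [hmul2, show -(a/2) - 1 + 2 = 1 - a/2 by ring]
  have hEuler : ∀ i : Fin m, euler
      (fun y : EuclideanSpace ℝ (Fin m) =>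
          lagQ a c (gamma0 m a c) t ‖y‖ * ‖y‖ ^ (beta0 b c + a / 2 - 1) * y i) x
      = (∑ k ∈ Finset.range (t+1), myCq a c (gamma0 m a c) t k
          * ((1 + myE a (beta0 b c) k) * ‖x‖ ^ (myE a (beta0 b c) k))) * x i := by
    intro i
    simp only [euler, hpd]
    rw [Finset.sum_mul]
    simp only [Finset.mul_sum]
    rw [Finset.sum_comm]
    refine Finset.sum_congr rfl fun k _ => ?_
    have split : ∀ j : Fin m, x j * (myCq a c (gamma0 m a c) t k
        * (‖x‖ ^ (myE a (beta0 b c) k) * (if i = j then (1:ℝ) else 0)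
          + x i * (myE a (beta0 b c) k * ‖x‖ ^ (myE a (beta0 b c) k - 2) * x j)))
        = (if i = j then x j * (myCq a c (gamma0 m a c) t k * ‖x‖ ^ (myE a (beta0 b c) k)) else 0)
          + (x j * x j) * (myCq a c (gamma0 m a c) t k
              * (x i * (myE a (beta0 b c) k * ‖x‖ ^ (myE a (beta0 b c) k - 2)))) := by
      intro j
      by_cases h : i = j <;> simp [h] <;> ring
    rw [Finset.sum_congr rfl fun j _ => split j, Finset.sum_add_distrib,
      Finset.sum_ite_eq, ← Finset.sum_mul, hsq]
    simp only [Finset.mem_univ, if_true]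
    linear_combination (myCq a c (gamma0 m a c) t k * myE a (beta0 b c) k * x i) * e1 k
  have hFx : ∀ i : Fin m,
      lagQ a c (gamma0 m a c) t ‖x‖ * ‖x‖ ^ (beta0 b c + a / 2 - 1) * x i
        = ∑ k ∈ Finset.range (t+1), myCq a c (gamma0 m a c) t k
            * (‖x‖ ^ (myE a (beta0 b c) k) * x i) := fun i => hf i x hx
  have hDop : ∀ i : Fin m, Dop a b c i
      (fun y : EuclideanSpace ℝ (Fin m) =>
          lagQ a c (gamma0 m a c) t ‖y‖ * ‖y‖ ^ (beta0 b c + a / 2 - 1) * y i) x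
      = ∑ k ∈ Finset.range (t+1),
          (myCq a c (gamma0 m a c) t k
              * (‖x‖ ^ ((1:ℝ) - a/2) * ‖x‖ ^ (myE a (beta0 b c) k))
            + (x i * x i) * (myCq a c (gamma0 m a c) t k
                * (myE a (beta0 b c) k
                    * (‖x‖ ^ ((1:ℝ) - a/2) * ‖x‖ ^ (myE a (beta0 b c) k - 2)))
              + (b + c * (1 + myE a (beta0 b c) k)) * (myCq a c (gamma0 m a c) t k
                  * (‖x‖ ^ (-(a/2) - 1) * ‖x‖ ^ (myE a (beta0 b c) k))))) := by
    intro i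
    simp only [Dop]
    rw [hpd i i, hEuler i, hFx i]
    simp only [Finset.mul_sum, Finset.sum_mul]
    rw [← Finset.sum_add_distrib, ← Finset.sum_add_distrib]
    refine Finset.sum_congr rfl fun k _ => ?_
    simp only [eq_self_iff_true, if_true]
    ring

  simp only [hDop]
  rw [Finset.sum_comm]
  simp only [lagP]
  rw [Finset.sum_mul, Finset.mul_sum]
  refine Finset.sum_congr rfl fun k hk => ?_
  rw [Finset.sum_add_distrib, Finset.sum_const, ← Finset.sum_mul, hsq]
  have hexp : ‖x‖ ^ ((1:ℝ) - a/2) * ‖x‖ ^ (myE a (beta0 b c) k)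
      = ‖x‖ ^ (a * (k:ℝ)) * ‖x‖ ^ (beta0 b c) := by
    rw [hmerge, hmerge]
    congr 1
    simp only [myE]
    ring
  have hkey := coeff_key m hm a b c ha hc t k
  simp only [myCp] at hkey
  have e1' := e1 k
  simp only [Finset.card_univ, Fintype.card_fin, nsmul_eq_mul]
  linear_combination (myCq a c (gamma0 m a c) t k * myE a (beta0 b c) k * ‖x‖ ^ ((1:ℝ) - a/2)) * e1'
    + ((b + c * (1 + myE a (beta0 b c) k)) * myCq a c (gamma0 m a c) t k
        * ‖x‖ ^ (myE a (beta0 b c) k)) * e2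
    + (myCq a c (gamma0 m a c) t k * ((m:ℝ) + myE a (beta0 b c) k + b
        + c * (1 + myE a (beta0 b c) k))) * hexp
    + (‖x‖ ^ (a * (k:ℝ)) * ‖x‖ ^ (beta0 b c)) * hkey
end
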